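/- arXiv:2307.11614 — 7 statements merged into one kernel-verified Lean document; each statement's English description precedes it below -/
import Mathlib

section
/- Let all parameters b_H, b_M, d_M, β_MH, β_HM, γ_H, γ_M, σ_H, K, H be positive with b_M > d_M, and set K* = K(1 − d_M/b_M), a_H = (γ_H+b_H)(σ_H+b_H)/(b_H γ_H), a_M = (γ_M+d_M)/γ_M, R₀^M = √(β_HM β_MH K* γ_M γ_H / (H d_M (b_H+σ_H)(γ_M+d_M)(γ_H+b_H))), I_H* = (K* β_MH/(H b_H a_M + K* β_MH))·(1 − 1/(R₀^M)²)·(H/a_H), and I_M* = (β_HM/(a_H d_M + β_HM))·(1 − 1/(R₀^M)²)·(K*/a_M). If R₀^M > 1, then the tuple (S_H*, E_H*, I_H*, S_M*, E_M*, I_M*) = (H − a_H I_H*, ((σ_H+b_H)/γ_H) I_H*, I_H*, K* − a_M I_M*, (d_M/γ_M) I_M*, I_M*) satisfies all six stationarity equations: 0 = b_H H − (β_MH/H) I_M* S_H* − b_H S_H*; 0 = (β_MH/H) I_M* S_H* − (γ_H+b_H) E_H*; 0 = γ_H E_H* − (σ_H+b_H) I_H*; 0 = d_M M* − (β_HM/H)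 S_M* I_H* − d_M S_M* with M* = S_M*+E_M*+I_M* = K*; 0 = (β_HM/H) S_M* I_H* − (γ_M+d_M) E_M*; 0 = γ_M E_M* − d_M I_M*. Moreover I_H* > 0 and I_M* > 0 if and only if R₀^M > 1. -/
/-!
Measure the host prevalence as `x = a_H I_H / H` and the vector prevalence as `y = a_M I_M / K*`.
At equilibrium the exposed classes are proportional to the infected ones and the susceptible
classes are `H (1 - x)` and `K* (1 - y)`, so the six equations reduce to the two incidence balances
`m y (1 - x) = x` and `n x (1 - y) = y` with `m = K* β_MH / (H b_H a_M)`, `n = β_HM / (a_H d_M)`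
and `m n = (R₀^M)²`. Their nontrivial solution is `x = m/(1+m) · (1 - 1/(mn))` and the same with
`m`, `n` swapped, which is positive exactly when `mn > 1`.
-/

namespace SEIRSEI

noncomputable def endemicFraction (m n : ℝ) : ℝ := m / (1 + m) * (1 - 1 / (m * n))

variable {m n : ℝ}

theorem endemicFraction_balance (hm : 0 < m) (hn : 0 < n) :
    m * endemicFraction n m * (1 - endemicFraction m n) = endemicFraction m n := by
  unfold endemicFraction
  field_simp
  ring

theorem endemicFraction_pos_iff (hm : 0 < m) (hn : 0 < n) :
    0 < endemicFraction m n ↔ 1 < m * n := by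
  have hmn : 0 < m * n := mul_pos hm hn
  rw [endemicFraction, mul_pos_iff_of_pos_left (by positivity), sub_pos, div_lt_one hmn]

theorem incidence_eq_of_balance {β μ a a' N N' H x y : ℝ} (hH : H ≠ 0) (hμ : μ ≠ 0)
    (ha : a ≠ 0) (ha' : a' ≠ 0) (h : β * N' / (H * μ * a') * y * (1 - x) = x) :
    β / H * (N' / a' * y) * (N - a * (N / a * x)) = μ * a * (N / a * x) := by
  calc β / H * (N' / a' * y) * (N - a * (N / a * x))
      = μ * N * (β * N' / (H * μ * a') * y * (1 - x)) := by field_simp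
    _ = μ * a * (N / a * x) := by rw [h]; field_simp

theorem host_stationary {bH γH σH βMH H aH SH EH IH IM : ℝ} (hbH : bH ≠ 0) (hγH : γH ≠ 0)
    (haH : aH = (γH + bH) * (σH + bH) / (bH * γH)) (hSH : SH = H - aH * IH)
    (hEH : EH = (σH + bH) / γH * IH) (h : βMH / H * IM * SH = bH * aH * IH) :
    0 = bH * H - βMH / H * IM * SH - bH * SH ∧
    0 = βMH / H * IM * SH - (γH + bH) * EH ∧
    0 = γH * EH - (σH + bH) * IH := by
  subst haH hSH hEH
  refine ⟨?_, ?_, ?_⟩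
  · rw [h]; ring
  · rw [h]; field_simp; ring
  · field_simp; ring

theorem vector_stationary {dM γM βHM H N aM SM EM IH IM : ℝ} (hγM : γM ≠ 0)
    (haM : aM = (γM + dM) / γM) (hSM : SM = N - aM * IM) (hEM : EM = dM / γM * IM)
    (h : βHM / H * SM * IH = dM * aM * IM) :
    SM + EM + IM = N ∧
    0 = dM * (SM + EM + IM) - βHM / H * SM * IH - dM * SM ∧
    0 = βHM / H * SM * IH - (γM + dM) * EM ∧
    0 = γM * EM - dM * IM := by
  subst haM hSM hEM
  have hN : N - (γM + dM) / γM * IM + dM / γM * IM + IM = N := by field_simp; ring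
  refine ⟨hN, ?_, ?_, ?_⟩
  · rw [hN, h]; ring
  · rw [h]; field_simp; ring
  · field_simp; ring

end SEIRSEI

open SEIRSEI in
/-- endemic equilibrium of the uncontrolled SEIR–SEI system.
If `R₀^M > 1` then the explicit tuple satisfies the six stationarity equations
(with `M* = S_M* + E_M* + I_M* = K*`), and moreover `I_H* > 0 ∧ I_M* > 0 ↔ R₀^M > 1`. -/
theorem endemic_equilibrium_SEIR
    (bH bM dM βMH βHM γH γM σH K H : ℝ)
    (hbH : 0 < bH) (hbM : 0 < bM) (hdM : 0 < dM) (hβMH : 0 < βMH) (hβHM : 0 < βHM)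
    (hγH : 0 < γH) (hγM : 0 < γM) (hσH : 0 < σH) (hK : 0 < K) (hH : 0 < H)
    (hbMdM : dM < bM) :
    let Kstar : ℝ := K * (1 - dM / bM)
    let aH : ℝ := (γH + bH) * (σH + bH) / (bH * γH)
    let aM : ℝ := (γM + dM) / γM
    let R0M : ℝ := Real.sqrt (βHM * βMH * Kstar * γM * γH /
      (H * dM * (bH + σH) * (γM + dM) * (γH + bH)))
    let IHs : ℝ := (Kstar * βMH / (H * bH * aM + Kstar * βMH)) * (1 - 1 / R0M ^ 2) * (H / aH)
    let IMs : ℝ := (βHM / (aH * dM + βHM)) * (1 - 1 / R0M ^ 2) * (Kstar / aM)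
    let SHs : ℝ := H - aH * IHs
    let EHs : ℝ := ((σH + bH) / γH) * IHs
    let SMs : ℝ := Kstar - aM * IMs
    let EMs : ℝ := (dM / γM) * IMs
    (1 < R0M →
      ((0 : ℝ) = bH * H - (βMH / H) * IMs * SHs - bH * SHs ∧
       (0 : ℝ) = (βMH / H) * IMs * SHs - (γH + bH) * EHs ∧
       (0 : ℝ) = γH * EHs - (σH + bH) * IHs ∧
       SMs + EMs + IMs = Kstar ∧
       (0 : ℝ) = dM * (SMs + EMs + IMs) - (βHM / H) * SMs * IHs - dM * SMs ∧
       (0 : ℝ) = (βHM / H) * SMs * IHs - (γM + dM) * EMs ∧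
       (0 : ℝ) = γM * EMs - dM * IMs)) ∧
    ((0 < IHs ∧ 0 < IMs) ↔ 1 < R0M) := by
  intro Kstar aH aM R0M IHs IMs SHs EHs SMs EMs
  have hKstar : 0 < Kstar := mul_pos hK (by rw [sub_pos, div_lt_one hbM]; exact hbMdM)
  have haH : 0 < aH := by positivity
  have haM : 0 < aM := by positivity
  set m := βMH * Kstar / (H * bH * aM)
  set n := βHM * H / (H * dM * aH)
  have hm : 0 < m := by positivity
  have hn : 0 < n := by positivity
  have hR0M : R0M = √(m * n) := by
    simp only [R0M, m, n, aH, aM]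
    congr 1
    field_simp
    ring
  have hR0M_sq : R0M ^ 2 = m * n := by rw [hR0M, Real.sq_sqrt (mul_pos hm hn).le]
  have hIHs : IHs = H / aH * endemicFraction m n := by
    simp only [IHs, endemicFraction, hR0M_sq, m]
    field_simp
  have hIMs : IMs = Kstar / aM * endemicFraction n m := by
    simp only [IMs, endemicFraction, hR0M_sq, n]
    field_simp
  have host_incidence : βMH / H * IMs * SHs = bH * aH * IHs := by
    simp only [SHs, hIHs, hIMs]
    exact incidence_eq_of_balance hH.ne' hbH.ne' haH.ne' haM.ne'
      (endemicFraction_balance hm hn)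
  have vector_incidence : βHM / H * SMs * IHs = dM * aM * IMs := by
    simp only [SMs, hIHs, hIMs]
    rw [mul_right_comm]
    exact incidence_eq_of_balance hH.ne' hdM.ne' haM.ne' haH.ne'
      (endemicFraction_balance hn hm)
  have hR0M_iff : 1 < R0M ↔ 1 < m * n := by
    rw [hR0M, Real.lt_sqrt zero_le_one, one_pow]
  refine ⟨fun _ => ?_, ?_⟩
  · have host := host_stationary hbH.ne' hγH.ne' rfl rfl rfl host_incidence
    exact ⟨host.1, host.2.1, host.2.2, vector_stationary hγM.ne' rfl rfl rfl vector_incidence⟩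
  · rw [hR0M_iff, hIHs, hIMs, mul_pos_iff_of_pos_left (by positivity),
      mul_pos_iff_of_pos_left (by positivity), endemicFraction_pos_iff hm hn,
      endemicFraction_pos_iff hn hm, mul_comm n, and_self]
end

section
/- Let b_H, d_M, β_MH, β_HM, γ_H, γ_M, σ_H, K*, H be positive reals. Let F be the 4×4 complex matrix whose only nonzero entries are F₁₄ = β_MH and F₃₂ = (β_HM/H)·K*, and let V be the 4×4 complex matrix with diagonal entries (γ_H+b_H, σ_H+b_H, γ_M+d_M, d_M), subdiagonal entries V₂₁ = −γ_H and V₄₃ = −γ_M, and all other entries zero. Then V is invertible, and the spectral radius of F·V⁻¹ equals √(β_HM β_MH K* γ_M γ_H / (H d_M (b_H+σ_H)(γ_M+d_M)(γ_H+b_H))). -/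
/-!
`V` is block lower bidiagonal, so `V⁻¹` is explicit, and `F * V⁻¹` is nonzero only in rows 1 and 3
(host and vector exposure). Its characteristic polynomial is `μ² (μ² - a b)` with
`a = (F V⁻¹)₁₃` and `b = (F V⁻¹)₃₁`, so the eigenvalues are `0` and `±√(a b)`, and the spectral
radius is `√(a b)`: the geometric mean of the vector-to-host and host-to-vector reproduction numbers.
-/

open Matrix

theorem lowerBidiagonal_mul_eq_one {K : Type*} [Field K] {p q s d g m : K} (hp : p ≠ 0)
    (hq : q ≠ 0) (hs : s ≠ 0) (hd : d ≠ 0) :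
    !![p, 0, 0, 0; -g, q, 0, 0; 0, 0, s, 0; 0, 0, -m, d] *
      !![p⁻¹, 0, 0, 0; g / (p * q), q⁻¹, 0, 0; 0, 0, s⁻¹, 0; 0, 0, m / (s * d), d⁻¹] = 1 := by
  ext i j
  fin_cases i <;> fin_cases j <;> simp [mul_apply, Fin.sum_univ_four, one_apply] <;>
    field_simp <;> ring

theorem twoCycle_mul_lowerBidiagonal {R : Type*} [Semiring R] (e k x₁₁ x₂₁ x₂₂ x₃₃ x₄₃ x₄₄ : R) :
    !![0, 0, 0, e; 0, 0, 0, 0; 0, k, 0, 0; 0, 0, 0, 0] *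
      !![x₁₁, 0, 0, 0; x₂₁, x₂₂, 0, 0; 0, 0, x₃₃, 0; 0, 0, x₄₃, x₄₄] =
    !![0, 0, e * x₄₃, e * x₄₄; 0, 0, 0, 0; k * x₂₁, k * x₂₂, 0, 0; 0, 0, 0, 0] := by
  ext i j
  fin_cases i <;> fin_cases j <;> simp [mul_apply, Fin.sum_univ_four]

theorem det_scalar_sub_twoCycle {R : Type*} [CommRing R] (μ a e b c : R) :
    (algebraMap R (Matrix (Fin 4) (Fin 4) R) μ -
      !![0, 0, a, e; 0, 0, 0, 0; b, c, 0, 0; 0, 0, 0, 0]).det = μ ^ 2 * (μ ^ 2 - a * b) := by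
  rw [algebraMap_eq_diagonal, Pi.algebraMap_def, Algebra.algebraMap_self, RingHom.id_apply]
  simp [det_succ_row_zero, Fin.sum_univ_succ, Fin.succAbove]
  ring

theorem spectrum_twoCycle {K : Type*} [Field K] {a b r : K} (e c : K) (hr : r ^ 2 = a * b) :
    spectrum K !![0, 0, a, e; 0, 0, 0, 0; b, c, 0, 0; 0, 0, 0, 0] = {0, r, -r} := by
  ext μ
  have hfactor : μ ^ 2 * (μ ^ 2 - a * b) = μ ^ 2 * ((μ - r) * (μ + r)) := by rw [← hr]; ring
  rw [spectrum.mem_iff, isUnit_iff_isUnit_det, isUnit_iff_ne_zero, not_not,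
    det_scalar_sub_twoCycle, hfactor]
  simp only [Set.mem_insert_iff, Set.mem_singleton_iff, mul_eq_zero, pow_eq_zero_iff two_ne_zero,
    sub_eq_zero, add_eq_zero_iff_eq_neg]

theorem spectralRadius_eq_of_spectrum_eq {𝕜 A : Type*} [NormedField 𝕜] [Ring A] [Algebra 𝕜 A]
    {a : A} {r : 𝕜} (h : spectrum 𝕜 a = {0, r, -r}) : spectralRadius 𝕜 a = ‖r‖₊ := by
  rw [spectralRadius, h, iSup_insert, iSup_insert, iSup_singleton]
  simp

/-- next-generation matrix computation of `R₀^M` for the SEIR–SEI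
model: `V` is invertible and the spectral radius of `F·V⁻¹` equals
`√(β_HM β_MH K* γ_M γ_H / (H d_M (b_H+σ_H)(γ_M+d_M)(γ_H+b_H)))`. -/
theorem spectralRadius_next_generation_SEIR
    (bH dM βMH βHM γH γM σH Kstar H : ℝ)
    (hbH : 0 < bH) (hdM : 0 < dM) (hβMH : 0 < βMH) (hβHM : 0 < βHM)
    (hγH : 0 < γH) (hγM : 0 < γM) (hσH : 0 < σH) (hK : 0 < Kstar) (hH : 0 < H) :
    let F : Matrix (Fin 4) (Fin 4) ℂ :=
      !![0, 0, 0, (βMH : ℂ);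
         0, 0, 0, 0;
         0, ((βHM : ℂ) / (H : ℂ)) * (Kstar : ℂ), 0, 0;
         0, 0, 0, 0]
    let V : Matrix (Fin 4) (Fin 4) ℂ :=
      !![(γH : ℂ) + (bH : ℂ), 0, 0, 0;
         -(γH : ℂ), (σH : ℂ) + (bH : ℂ), 0, 0;
         0, 0, (γM : ℂ) + (dM : ℂ), 0;
         0, 0, -(γM : ℂ), (dM : ℂ)]
    IsUnit V ∧
      spectralRadius ℂ (F * V⁻¹) =
        ENNReal.ofReal (Real.sqrt (βHM * βMH * Kstar * γM * γH /
          (H * dM * (bH + σH) * (γM + dM) * (γH + bH)))) := by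
  intro F V
  have hVW := lowerBidiagonal_mul_eq_one (p := (γH : ℂ) + bH) (q := (σH : ℂ) + bH)
    (s := (γM : ℂ) + dM) (d := dM) (g := γH) (m := γM)
    (by exact_mod_cast (add_pos hγH hbH).ne') (by exact_mod_cast (add_pos hσH hbH).ne')
    (by exact_mod_cast (add_pos hγM hdM).ne') (by exact_mod_cast hdM.ne')
  refine ⟨(isUnit_iff_isUnit_det V).2 (isUnit_det_of_right_inverse hVW), ?_⟩
  set R₀ := βHM * βMH * Kstar * γM * γH / (H * dM * (bH + σH) * (γM + dM) * (γH + bH))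
    with hR₀_def
  have hsq : ((√R₀ : ℝ) : ℂ) ^ 2 = βMH * (γM / ((γM + dM) * dM)) *
      (βHM / H * Kstar * (γH / ((γH + bH) * (σH + bH)))) := by
    rw [← Complex.ofReal_pow, Real.sq_sqrt (by positivity), hR₀_def]
    push_cast
    field_simp
    ring
  rw [inv_eq_right_inv hVW, twoCycle_mul_lowerBidiagonal,
    spectralRadius_eq_of_spectrum_eq (spectrum_twoCycle _ _ hsq),
    Complex.nnnorm_real, ← enorm_eq_nnnorm, Real.enorm_eq_ofReal (Real.sqrt_nonneg R₀)]
end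

section
/- Let b_H, d_M, d_W, β_MH, β_HM, β_WH, β_HW, γ_H, γ_M, γ_W, σ_H, K, H be positive reals. Let V be the 6×6 complex matrix with diagonal entries (γ_H+b_H, σ_H+b_H, γ_M+d_M, d_M, γ_W+d_W, d_W), entries V₂₁ = −γ_H, V₄₃ = −γ_M, V₆₅ = −γ_W, and all other entries zero. Let F_M be the 6×6 matrix whose only nonzero entries are (F_M)₁₄ = β_MH, (F_M)₁₆ = β_WH and (F_M)₃₂ = (β_HM/H)·K, and let F_W be the 6×6 matrix whose only nonzero entries are (F_W)₁₄ = β_MH, (F_W)₁₆ = β_WH and (F_W)₅₂ = (β_HW/H)·K. Then V is invertible, the spectral radius of F_M·V⁻¹ equals √(β_HM β_MH K γ_M γ_H / (H d_M (b_H+σ_H)(γ_M+d_M)(γ_H+b_H))), and the spectral radius of F_W·V⁻¹ equals √(β_HW β_WH K γ_W γ_H / (H d_W (b_H+σ_H)(γ_W+d_W)(γ_H+b_H))). -/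
/-!
`V` is block lower bidiagonal, so its inverse is explicit. Both `F_M V⁻¹` and `F_W V⁻¹` vanish
outside two rows `i = 0` and `j` (`j = 2`, resp. `j = 4`), with zero diagonal entries in those rows.
Such a matrix `M` satisfies `M³ = (M i j * M j i) • M`, so every eigenvalue `μ` solves
`μ³ = r² μ` with `r = √(M i j * M j i)`, while `r` itself is an eigenvalue, with eigenvector
`r eᵢ + M j i eⱼ`. Hence the spectral radius is `r`.
-/

open Matrix Polynomial

theorem spectralRadius_eq_of_pow_three_eq_smul {A : Type*} [Ring A] [Algebra ℂ A] [Nontrivial A]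
    {a : A} {r : ℝ} (hr : 0 ≤ r) (ha : a ^ 3 = ((r : ℂ) ^ 2) • a)
    (hmem : (r : ℂ) ∈ spectrum ℂ a) :
    spectralRadius ℂ a = ENNReal.ofReal r := by
  have hroot : ∀ μ ∈ spectrum ℂ a, μ ^ 3 - (r : ℂ) ^ 2 * μ = 0 := by
    intro μ hμ
    have := spectrum.subset_polynomial_aeval a (X ^ 3 - C ((r : ℂ) ^ 2) * X) ⟨μ, hμ, rfl⟩
    simpa [ha, Algebra.smul_def] using this
  refine le_antisymm (iSup₂_le fun μ hμ => ?_) (le_iSup₂_of_le (r : ℂ) hmem ?_)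
  · have hfac : μ * (μ - r) * (μ + r) = 0 := by linear_combination hroot μ hμ
    have hμr : ‖μ‖ ≤ r := by
      rcases mul_eq_zero.mp hfac with h | h
      · rcases mul_eq_zero.mp h with h | h
        · simp [h, hr]
        · simp [sub_eq_zero.mp h, abs_of_nonneg hr]
      · simp [eq_neg_of_add_eq_zero_left h, abs_of_nonneg hr]
    rw [← ENNReal.ofReal_coe_nnreal, coe_nnnorm]
    exact ENNReal.ofReal_le_ofReal hμr
  · rw [← ENNReal.ofReal_coe_nnreal, coe_nnnorm, Complex.norm_real, Real.norm_of_nonneg hr]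

theorem Matrix.mem_spectrum_of_mulVec_eq_smul {n K : Type*} [Fintype n] [DecidableEq n] [Field K]
    {M : Matrix n n K} {v : n → K} (hv : v ≠ 0) {μ : K} (h : M *ᵥ v = μ • v) :
    μ ∈ spectrum K M := by
  rw [← spectrum_toLin']
  exact Module.End.HasEigenvalue.mem_spectrum <|
    Module.End.hasEigenvalue_of_hasEigenvector ⟨Module.End.mem_eigenspace_iff.mpr h, hv⟩

section RowsEqZero

variable {n R : Type*} [Fintype n] [CommSemiring R]

theorem Matrix.mul_apply_of_rows_eq_zero {M N : Matrix n n R} {i j : n} (hij : i ≠ j)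
    (hN : ∀ k, k ≠ i → k ≠ j → N k = 0) (k c : n) :
    (M * N) k c = M k i * N i c + M k j * N j c :=
  Fintype.sum_eq_add i j hij fun l hl => by simp [hN l hl.1 hl.2]

theorem Matrix.pow_three_eq_smul_of_rows_eq_zero [DecidableEq n] {M : Matrix n n R} {i j : n}
    (hij : i ≠ j) (hM : ∀ k, k ≠ i → k ≠ j → M k = 0) (hi : M i i = 0) (hj : M j j = 0) :
    M ^ 3 = (M i j * M j i) • M := by
  ext k c
  rw [pow_three', mul_apply_of_rows_eq_zero hij hM, mul_apply_of_rows_eq_zero hij hM,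
    mul_apply_of_rows_eq_zero hij hM, smul_apply, smul_eq_mul, hi, hj]
  by_cases hki : k = i
  · subst hki; simp [hi]
  by_cases hkj : k = j
  · subst hkj; simp [hj]; ring
  simp [hM k hki hkj]

theorem Matrix.mulVec_eq_smul_of_rows_eq_zero [DecidableEq n] {M : Matrix n n R} {i j : n}
    (hij : i ≠ j) (hM : ∀ k, k ≠ i → k ≠ j → M k = 0) (hi : M i i = 0) (hj : M j j = 0)
    {r : R} (hr : r ^ 2 = M i j * M j i) :
    M *ᵥ (Pi.single i r + Pi.single j (M j i)) = r • (Pi.single i r + Pi.single j (M j i)) := by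
  ext k
  by_cases hki : k = i
  · subst hki; simp [mulVec_add, hi, hij]; rw [← sq, hr, mul_comm]
  by_cases hkj : k = j
  · subst hkj; simp [mulVec_add, hj, hki]
  simp [mulVec_add, hM k hki hkj, hki, hkj]

end RowsEqZero

theorem Matrix.spectralRadius_eq_sqrt_of_rows_eq_zero {n : Type*} [Fintype n] [DecidableEq n]
    {M : Matrix n n ℂ} {i j : n} (hij : i ≠ j) (hM : ∀ k, k ≠ i → k ≠ j → M k = 0)
    (hi : M i i = 0) (hj : M j j = 0) {s : ℝ} (hs : 0 < s) (hMs : (s : ℂ) = M i j * M j i) :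
    spectralRadius ℂ M = ENNReal.ofReal √s := by
  have : Nonempty n := ⟨i⟩
  have hr : (√s : ℂ) ^ 2 = M i j * M j i := by
    rw [← Complex.ofReal_pow, Real.sq_sqrt hs.le, hMs]
  refine spectralRadius_eq_of_pow_three_eq_smul (Real.sqrt_nonneg s) ?_ ?_
  · rw [hr]
    exact pow_three_eq_smul_of_rows_eq_zero hij hM hi hj
  · have hv : (Pi.single i (√s : ℂ) + Pi.single j (M j i) : n → ℂ) ≠ 0 := fun h => by
      simpa [hij, (Real.sqrt_pos.mpr hs).ne'] using congrFun h i
    exact mem_spectrum_of_mulVec_eq_smul hv (mulVec_eq_smul_of_rows_eq_zero hij hM hi hj hr)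

theorem blockBidiagonal_mul_eq_one {K : Type*} [Field K] {a₁ b₁ a₂ b₂ a₃ b₃ : K} (c₁ c₂ c₃ : K)
    (ha₁ : a₁ ≠ 0) (hb₁ : b₁ ≠ 0) (ha₂ : a₂ ≠ 0) (hb₂ : b₂ ≠ 0) (ha₃ : a₃ ≠ 0) (hb₃ : b₃ ≠ 0) :
    !![a₁, 0, 0, 0, 0, 0;
       -c₁, b₁, 0, 0, 0, 0;
       0, 0, a₂, 0, 0, 0;
       0, 0, -c₂, b₂, 0, 0;
       0, 0, 0, 0, a₃, 0;
       0, 0, 0, 0, -c₃, b₃] *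
    !![a₁⁻¹, 0, 0, 0, 0, 0;
       c₁ / (a₁ * b₁), b₁⁻¹, 0, 0, 0, 0;
       0, 0, a₂⁻¹, 0, 0, 0;
       0, 0, c₂ / (a₂ * b₂), b₂⁻¹, 0, 0;
       0, 0, 0, 0, a₃⁻¹, 0;
       0, 0, 0, 0, c₃ / (a₃ * b₃), b₃⁻¹] = 1 := by
  ext i j
  fin_cases i <;> fin_cases j <;> simp [mul_apply, Fin.sum_univ_six, one_apply] <;>
    field_simp <;> ring

/-- next-generation matrix computation for the Wolbachia model:
`V` is invertible, the spectral radius of `F_M·V⁻¹` is `R₀^M` and that of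
`F_W·V⁻¹` is `R₀^W`. -/
theorem spectralRadius_next_generation_Wolbachia
    (bH dM dW βMH βHM βWH βHW γH γM γW σH K H : ℝ)
    (hbH : 0 < bH) (hdM : 0 < dM) (hdW : 0 < dW)
    (hβMH : 0 < βMH) (hβHM : 0 < βHM) (hβWH : 0 < βWH) (hβHW : 0 < βHW)
    (hγH : 0 < γH) (hγM : 0 < γM) (hγW : 0 < γW) (hσH : 0 < σH)
    (hK : 0 < K) (hH : 0 < H) :
    let V : Matrix (Fin 6) (Fin 6) ℂ :=
      !![(γH : ℂ) + (bH : ℂ), 0, 0, 0, 0, 0;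
         -(γH : ℂ), (σH : ℂ) + (bH : ℂ), 0, 0, 0, 0;
         0, 0, (γM : ℂ) + (dM : ℂ), 0, 0, 0;
         0, 0, -(γM : ℂ), (dM : ℂ), 0, 0;
         0, 0, 0, 0, (γW : ℂ) + (dW : ℂ), 0;
         0, 0, 0, 0, -(γW : ℂ), (dW : ℂ)]
    let FM : Matrix (Fin 6) (Fin 6) ℂ :=
      !![0, 0, 0, (βMH : ℂ), 0, (βWH : ℂ);
         0, 0, 0, 0, 0, 0;
         0, ((βHM : ℂ) / (H : ℂ)) * (K : ℂ), 0, 0, 0, 0;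
         0, 0, 0, 0, 0, 0;
         0, 0, 0, 0, 0, 0;
         0, 0, 0, 0, 0, 0]
    let FW : Matrix (Fin 6) (Fin 6) ℂ :=
      !![0, 0, 0, (βMH : ℂ), 0, (βWH : ℂ);
         0, 0, 0, 0, 0, 0;
         0, 0, 0, 0, 0, 0;
         0, 0, 0, 0, 0, 0;
         0, ((βHW : ℂ) / (H : ℂ)) * (K : ℂ), 0, 0, 0, 0;
         0, 0, 0, 0, 0, 0]
    IsUnit V ∧
      spectralRadius ℂ (FM * V⁻¹) =
        ENNReal.ofReal (Real.sqrt (βHM * βMH * K * γM * γH /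
          (H * dM * (bH + σH) * (γM + dM) * (γH + bH)))) ∧
      spectralRadius ℂ (FW * V⁻¹) =
        ENNReal.ofReal (Real.sqrt (βHW * βWH * K * γW * γH /
          (H * dW * (bH + σH) * (γW + dW) * (γH + bH)))) := by
  intro V FM FW
  have hVW := blockBidiagonal_mul_eq_one (K := ℂ) γH γM γW (a₁ := γH + bH) (b₁ := σH + bH)
    (a₂ := γM + dM) (b₂ := (dM : ℂ)) (a₃ := γW + dW) (b₃ := (dW : ℂ)) (by norm_cast; positivity)
    (by norm_cast; positivity) (by norm_cast; positivity) (by norm_cast; positivity)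
    (by norm_cast; positivity) (by norm_cast; positivity)
  have hVinv : V⁻¹ = _ := inv_eq_right_inv hVW
  refine ⟨(isUnit_iff_isUnit_det V).mpr (isUnit_det_of_right_inverse hVW), ?_, ?_⟩
  · rw [hVinv]
    refine spectralRadius_eq_sqrt_of_rows_eq_zero (i := 0) (j := 2) (by decide) ?_ ?_ ?_
      (by positivity) ?_
    · intro k hk0 hk2; ext c; fin_cases k <;> simp [FM, mul_apply, Fin.sum_univ_six] at hk0 hk2 ⊢
    · simp [FM, mul_apply, Fin.sum_univ_six]
    · simp [FM, mul_apply, Fin.sum_univ_six]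
    simp only [FM, mul_apply, Fin.sum_univ_six, of_apply, cons_val', cons_val_fin_one,
      cons_val_zero, cons_val, cons_val_one, Fin.isValue, mul_zero, zero_mul, add_zero, zero_add]
    norm_cast
    field_simp
    ring
  · rw [hVinv]
    refine spectralRadius_eq_sqrt_of_rows_eq_zero (i := 0) (j := 4) (by decide) ?_ ?_ ?_
      (by positivity) ?_
    · intro k hk0 hk2; ext c; fin_cases k <;> simp [FW, mul_apply, Fin.sum_univ_six] at hk0 hk2 ⊢
    · simp [FW, mul_apply, Fin.sum_univ_six]
    · simp [FW, mul_apply, Fin.sum_univ_six]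
    simp only [FW, mul_apply, Fin.sum_univ_six, of_apply, cons_val', cons_val_fin_one,
      cons_val_zero, cons_val, cons_val_one, Fin.isValue, mul_zero, zero_mul, add_zero, zero_add]
    norm_cast
    field_simp
    ring
end

section
/- Let β_HM, β_HW, d_M, d_W, a_H be positive reals, p* ∈ [0,1], and let R₀^M, R₀^W be nonnegative reals; set R² = (R₀^W)²·p* + (R₀^M)²·(1−p*). Define the quadratic polynomial P(Z) = Z²·(β_HM β_HW + a_H(β_HM d_W (R₀^M)²(1−p*) + β_HW d_M (R₀^W)²p*)) + Z·(R² a_H d_M d_W − (R²−1)(β_HM d_W + β_HW d_M)) − (R²−1) d_M d_W. If R² > 1, then P has exactly one positive real root. -/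
lemma quad_unique_pos_root (A B C : ℝ) (hA : 0 < A) (hC : 0 < C) :
    ∃! z : ℝ, 0 < z ∧ z ^ 2 * A + z * B - C = 0 := by
  have hdisc : (0:ℝ) < B ^ 2 + 4 * A * C := by nlinarith [sq_nonneg B]
  set s := Real.sqrt (B ^ 2 + 4 * A * C) with hs_def
  have hs2 : s ^ 2 = B ^ 2 + 4 * A * C := Real.sq_sqrt hdisc.le
  have hs0 : 0 ≤ s := Real.sqrt_nonneg _
  have hsB : B < s := by nlinarith [hs2, hs0, sq_nonneg (B - s), sq_nonneg (B + s)]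
  refine ⟨(s - B) / (2 * A), ⟨div_pos (by linarith) (by linarith), ?_⟩, ?_⟩
  · field_simp
    nlinarith [hs2]
  · rintro y ⟨hy, hroot⟩
    set z := (s - B) / (2 * A) with hz_def
    have hz : 0 < z := div_pos (by linarith) (by linarith)
    have hzroot : z ^ 2 * A + z * B - C = 0 := by
      rw [hz_def]; field_simp; nlinarith [hs2]
    by_contra hne
    have hsub : (y - z) * (A * (y + z) + B) = 0 := by
      have : (y ^ 2 * A + y * B - C) - (z ^ 2 * A + z * B - C) = 0 := by
        rw [hroot, hzroot]; ring
      nlinarith [this]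
    have hBd : A * (y + z) + B = 0 := by
      rcases mul_eq_zero.mp hsub with h | h
      · exact absurd (sub_eq_zero.mp h) hne
      · exact h
    nlinarith [mul_pos hy hz, hroot]

/-- if `R² = (R₀^W)² p* + (R₀^M)² (1−p*) > 1`, the quadratic `P`
characterizing the endemic equilibrium of the Wolbachia model has exactly one
positive real root. -/
theorem unique_positive_root_endemic_polynomial
    (βHM βHW dM dW aH : ℝ)
    (hβHM : 0 < βHM) (hβHW : 0 < βHW) (hdM : 0 < dM) (hdW : 0 < dW) (haH : 0 < aH)
    (pstar : ℝ) (hpstar : pstar ∈ Set.Icc (0 : ℝ) 1)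
    (R0M R0W : ℝ) (hR0M : 0 ≤ R0M) (hR0W : 0 ≤ R0W) :
    let R2 : ℝ := R0W ^ 2 * pstar + R0M ^ 2 * (1 - pstar)
    let P : ℝ → ℝ := fun Z =>
      Z ^ 2 * (βHM * βHW + aH * (βHM * dW * R0M ^ 2 * (1 - pstar)
        + βHW * dM * R0W ^ 2 * pstar))
      + Z * (R2 * aH * dM * dW - (R2 - 1) * (βHM * dW + βHW * dM))
      - (R2 - 1) * dM * dW
    1 < R2 → ∃! z : ℝ, 0 < z ∧ P z = 0 := by
  intro R2 P hR2
  obtain ⟨hp0, hp1⟩ := hpstar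
  have hA : 0 < βHM * βHW + aH * (βHM * dW * R0M ^ 2 * (1 - pstar)
      + βHW * dM * R0W ^ 2 * pstar) := by
    have h1 : 0 ≤ βHM * dW * R0M ^ 2 * (1 - pstar) := by
      apply mul_nonneg (by positivity) (by linarith)
    have h2 : 0 ≤ βHW * dM * R0W ^ 2 * pstar := by
      apply mul_nonneg (by positivity) hp0
    nlinarith
  have hC : 0 < (R2 - 1) * dM * dW := by
    have h : 0 < R2 - 1 := by linarith
    exact mul_pos (mul_pos h hdM) hdW
  have h := quad_unique_pos_root
    (βHM * βHW + aH * (βHM * dW * R0M ^ 2 * (1 - pstar) + βHW * dM * R0W ^ 2 * pstar))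
    (R2 * aH * dM * dW - (R2 - 1) * (βHM * dW + βHW * dM))
    ((R2 - 1) * dM * dW) hA hC
  exact h
end

section
/- Consider the simplified Wolbachia system with no control (u = 0) and fix p* an equilibrium of p' = f(p) (e.g. p* = 0). Let R_{p*}² = (R₀^W)²p* + (R₀^M)²(1−p*) and assume R_{p*} > 1. Then the system is uniformly persistent on the set of initial conditions whose p-component converges to p*: there exists η > 0 such that every nonnegative solution (S_H, E_H, I_H, E_M, I_M, E_W, I_W, p) of the system defined on [0,∞), remaining in the compact positively invariant region where S_H+E_H+I_H ≤ H, E_M+I_M+E_W+I_W ≤ K and 0 ≤ p ≤ 1, with p(t) → p* as t → ∞ and with (E_H+I_H+E_M+I_M+E_W+I_W)(0) > 0, satisfies liminf_{t→∞} (E_H+I_H+E_M+I_M+E_W+I_W)(t) > η. -/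
open Filter Set

/-- Exponential comparison: if `u' ≥ -μ u` on `[a,b]` then `u b ≥ u a * exp (-μ (b-a))`. -/
lemma expComp {u g : ℝ → ℝ} {μ a b : ℝ} (hab : a ≤ b)
    (hu : ∀ s ∈ Set.Icc a b, HasDerivWithinAt u (g s) (Set.Icc a b) s)
    (hineq : ∀ s ∈ Set.Icc a b, -μ * u s ≤ g s) :
    u a * Real.exp (-μ * (b - a)) ≤ u b := by
  set w : ℝ → ℝ := fun s => u s * Real.exp (μ * s) with hw
  have hwd : ∀ s ∈ Set.Icc a b,
      HasDerivWithinAt w (g s * Real.exp (μ * s) + u s * (Real.exp (μ * s) * μ))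
        (Set.Icc a b) s := by
    intro s hs
    have h1 : HasDerivAt (fun x : ℝ => Real.exp (μ * x)) (Real.exp (μ * s) * μ) s := by
      simpa using ((hasDerivAt_id s).const_mul μ).exp
    exact (hu s hs).mul h1.hasDerivWithinAt
  have hmono : MonotoneOn w (Set.Icc a b) := by
    apply monotoneOn_of_deriv_nonneg (convex_Icc a b)
    · intro s hs; exact (hwd s hs).continuousWithinAt
    · intro s hs
      rw [interior_Icc] at hs
      exact (((hwd s ⟨hs.1.le, hs.2.le⟩).hasDerivAt
        (Icc_mem_nhds hs.1 hs.2)).differentiableAt).differentiableWithinAt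
    · intro s hs
      rw [interior_Icc] at hs
      have hd := (hwd s ⟨hs.1.le, hs.2.le⟩).hasDerivAt (Icc_mem_nhds hs.1 hs.2)
      rw [hd.deriv]
      have h2 := hineq s ⟨hs.1.le, hs.2.le⟩
      have h3 : 0 ≤ g s + μ * u s := by linarith
      have : g s * Real.exp (μ * s) + u s * (Real.exp (μ * s) * μ)
          = (g s + μ * u s) * Real.exp (μ * s) := by ring
      rw [this]
      positivity
  have h4 : w a ≤ w b := hmono (Set.left_mem_Icc.2 hab) (Set.right_mem_Icc.2 hab) hab
  have h5 : u a * Real.exp (μ * a) ≤ u b * Real.exp (μ * b) := h4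
  have h6 : 0 < Real.exp (μ * b) := Real.exp_pos _
  rw [show -μ * (b - a) = μ * a - μ * b by ring, Real.exp_sub, div_eq_mul_inv, ← mul_assoc]
  rw [mul_inv_le_iff₀ h6]
  linarith

lemma exists_rate (bH dM dW βMH βHM βWH βHW γH γM γW σH K H : ℝ)
    (hbH : 0 < bH) (hdM : 0 < dM) (hdW : 0 < dW)
    (hβMH : 0 < βMH) (hβHM : 0 < βHM) (hβWH : 0 < βWH) (hβHW : 0 < βHW)
    (hγH : 0 < γH) (hγM : 0 < γM) (hγW : 0 < γW) (hσH : 0 < σH)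
    (hK : 0 < K) (hH : 0 < H)
    (pstar : ℝ) (hpstar : pstar ∈ Set.Icc (0 : ℝ) 1)
    (R0M R0W : ℝ)
    (hR0M : R0M = Real.sqrt (βHM * βMH * K * γM * γH /
      (H * dM * (bH + σH) * (γM + dM) * (γH + bH))))
    (hR0W : R0W = Real.sqrt (βHW * βWH * K * γW * γH /
      (H * dW * (bH + σH) * (γW + dW) * (γH + bH))))
    (hR : 1 < Real.sqrt (R0W ^ 2 * pstar + R0M ^ 2 * (1 - pstar))) :
    ∃ l > (0:ℝ), 0 < (βHM*K*(1-pstar)/H) * (γM*βMH/((l+dM)*(l+(γM+dM))))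
      + (βHW*K*pstar/H) * (γW*βWH/((l+dW)*(l+(γW+dW))))
      - (l+(σH+bH))*(l+(γH+bH))/γH := by
  set G : ℝ → ℝ := fun l => (βHM*K*(1-pstar)/H) * (γM*βMH/((l+dM)*(l+(γM+dM))))
      + (βHW*K*pstar/H) * (γW*βWH/((l+dW)*(l+(γW+dW))))
      - (l+(σH+bH))*(l+(γH+bH))/γH with hG
  have hM2 : R0M ^ 2 = βHM * βMH * K * γM * γH /
      (H * dM * (bH + σH) * (γM + dM) * (γH + bH)) := by
    rw [hR0M, Real.sq_sqrt]; positivity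
  have hW2 : R0W ^ 2 = βHW * βWH * K * γW * γH /
      (H * dW * (bH + σH) * (γW + dW) * (γH + bH)) := by
    rw [hR0W, Real.sq_sqrt]; positivity
  have hX : 1 < R0W ^ 2 * pstar + R0M ^ 2 * (1 - pstar) := by
    by_contra hc
    push_neg at hc
    have := Real.sqrt_le_sqrt hc
    rw [Real.sqrt_one] at this
    linarith
  have hG0 : 0 < G 0 := by
    obtain ⟨hp0, hp1⟩ := hpstar
    have key : G 0 = (R0W ^ 2 * pstar + R0M ^ 2 * (1 - pstar) - 1)
        * ((σH+bH)*(γH+bH)/γH) := by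
      rw [hG, hM2, hW2]
      field_simp
      ring
    rw [key]
    have h1 : 0 < (σH+bH)*(γH+bH)/γH := by positivity
    nlinarith
  have hcont : ContinuousAt G 0 := by
    rw [hG]
    apply ContinuousAt.sub
    apply ContinuousAt.add
    · exact continuousAt_const.mul ((continuousAt_const.div
        (((continuousAt_id.add continuousAt_const)).mul
          ((continuousAt_id.add continuousAt_const))) (by simp only [id_eq, zero_add]; positivity)))
    · exact continuousAt_const.mul ((continuousAt_const.div
        (((continuousAt_id.add continuousAt_const)).mul
          ((continuousAt_id.add continuousAt_const))) (by simp only [id_eq, zero_add]; positivity)))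
    · exact (((continuousAt_id.add continuousAt_const)).mul
        ((continuousAt_id.add continuousAt_const))).div_const _
  have hev : ∀ᶠ l in nhds (0:ℝ), 0 < G l := hcont.eventually (eventually_gt_nhds hG0)
  have hev2 : ∀ᶠ l in nhdsWithin (0:ℝ) (Set.Ioi 0), 0 < G l ∧ l ∈ Set.Ioi (0:ℝ) :=
    (hev.filter_mono nhdsWithin_le_nhds).and self_mem_nhdsWithin
  obtain ⟨l, hl1, hl2⟩ := hev2.exists
  exact ⟨l, hl2, hl1⟩

set_option maxHeartbeats 1000000 in
/-- uniform persistence of the simplified Wolbachia system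
when `R_{p*} > 1`: there is `η > 0` such that every nonnegative solution staying
in the invariant region, whose `p`-component converges to the equilibrium `p*`,
and whose infected compartments do not all vanish initially, satisfies
`liminf_{t→∞} (E_H+I_H+E_M+I_M+E_W+I_W)(t) > η`. -/
theorem uniform_persistence_Wolbachia
    (bH dM dW βMH βHM βWH βHW γH γM γW σH K H bM0 bW0 sh : ℝ)
    (hbH : 0 < bH) (hdM : 0 < dM) (hdW : 0 < dW)
    (hβMH : 0 < βMH) (hβHM : 0 < βHM) (hβWH : 0 < βWH) (hβHW : 0 < βHW)
    (hγH : 0 < γH) (hγM : 0 < γM) (hγW : 0 < γW) (hσH : 0 < σH)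
    (hK : 0 < K) (hH : 0 < H) (hbM0 : 0 < bM0) (hbW0 : 0 < bW0)
    (hsh0 : 0 < sh) (hsh1 : sh ≤ 1)
    (f : ℝ → ℝ)
    (hf : f = fun x => x * (1 - x) * (dM * bW0 - dW * bM0 * (1 - sh * x)) /
      (bM0 * (1 - x) * (1 - sh * x) + bW0 * x))
    (pstar : ℝ) (hpstar : pstar ∈ Set.Icc (0 : ℝ) 1)
    (hpeq : f pstar = 0)
    (R0M R0W : ℝ)
    (hR0M : R0M = Real.sqrt (βHM * βMH * K * γM * γH /
      (H * dM * (bH + σH) * (γM + dM) * (γH + bH))))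
    (hR0W : R0W = Real.sqrt (βHW * βWH * K * γW * γH /
      (H * dW * (bH + σH) * (γW + dW) * (γH + bH))))
    (hR : 1 < Real.sqrt (R0W ^ 2 * pstar + R0M ^ 2 * (1 - pstar))) :
    ∃ η > (0 : ℝ), ∀ SH EH IH EM IM EW IW p : ℝ → ℝ,
      (∀ s ∈ Set.Ici (0 : ℝ),
        HasDerivWithinAt SH (bH * H - (βMH / H) * IM s * SH s
          - (βWH / H) * IW s * SH s - bH * SH s) (Set.Ici 0) s ∧
        HasDerivWithinAt EH ((βMH / H) * IM s * SH s + (βWH / H) * IW s * SH s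
          - (γH + bH) * EH s) (Set.Ici 0) s ∧
        HasDerivWithinAt IH (γH * EH s - (σH + bH) * IH s) (Set.Ici 0) s ∧
        HasDerivWithinAt EM ((βHM / H) * (K * (1 - p s) - EM s - IM s) * IH s
          - (γM + dM) * EM s) (Set.Ici 0) s ∧
        HasDerivWithinAt IM (γM * EM s - dM * IM s) (Set.Ici 0) s ∧
        HasDerivWithinAt EW ((βHW / H) * (K * p s - EW s - IW s) * IH s
          - (γW + dW) * EW s) (Set.Ici 0) s ∧
        HasDerivWithinAt IW (γW * EW s - dW * IW s) (Set.Ici 0) s ∧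
        HasDerivWithinAt p (f (p s)) (Set.Ici 0) s) →
      (∀ s ∈ Set.Ici (0 : ℝ), 0 ≤ SH s ∧ 0 ≤ EH s ∧ 0 ≤ IH s ∧
        0 ≤ EM s ∧ 0 ≤ IM s ∧ 0 ≤ EW s ∧ 0 ≤ IW s) →
      (∀ s ∈ Set.Ici (0 : ℝ), SH s + EH s + IH s ≤ H ∧
        EM s + IM s + EW s + IW s ≤ K ∧ p s ∈ Set.Icc (0 : ℝ) 1) →
      Tendsto p atTop (nhds pstar) →
      0 < EH 0 + IH 0 + EM 0 + IM 0 + EW 0 + IW 0 →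
      η < liminf (fun s => EH s + IH s + EM s + IM s + EW s + IW s) atTop := by
  obtain ⟨l, hl, hGl⟩ := exists_rate bH dM dW βMH βHM βWH βHW γH γM γW σH K H
    hbH hdM hdW hβMH hβHM hβWH hβHW hγH hγM hγW hσH hK hH pstar hpstar
    R0M R0W hR0M hR0W hR
  obtain ⟨hp0, hp1⟩ := hpstar
  -- the left eigenvector coefficients
  set c2 : ℝ := (l+(γH+bH))/γH with hc2def
  set c3 : ℝ := γM*βMH/((l+dM)*(l+(γM+dM))) with hc3def
  set c4 : ℝ := βMH/(l+dM) with hc4def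
  set c5 : ℝ := γW*βWH/((l+dW)*(l+(γW+dW))) with hc5def
  set c6 : ℝ := βWH/(l+dW) with hc6def
  clear_value c2 c3 c4 c5 c6
  have hc2p : 0 < c2 := by rw [hc2def]; positivity
  have hc3p : 0 < c3 := by rw [hc3def]; positivity
  have hc4p : 0 < c4 := by rw [hc4def]; positivity
  have hc5p : 0 < c5 := by rw [hc5def]; positivity
  have hc6p : 0 < c6 := by rw [hc6def]; positivity
  -- key eigenvector identities
  have hkeyEH : c2*γH = l+(γH+bH) := by rw [hc2def]; field_simp
  have hkeyEM : c4*γM = c3*(l+(γM+dM)) := by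
    rw [hc3def, hc4def]; field_simp
  have hkeyEW : c6*γW = c5*(l+(γW+dW)) := by
    rw [hc5def, hc6def]; field_simp
  have hkeyIM : βMH = c4*(l+dM) := by rw [hc4def]; field_simp
  have hkeyIW : βWH = c6*(l+dW) := by rw [hc6def]; field_simp
  -- the eigenvalue slack
  set Gv : ℝ := (βHM*K*(1-pstar)/H)*c3 + (βHW*K*pstar/H)*c5 - (l+(σH+bH))*c2 with hGvdef
  clear_value Gv
  have hGvp : 0 < Gv := by
    have heq : (l+(σH+bH))*c2 = (l+(σH+bH))*(l+(γH+bH))/γH := by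
      rw [hc2def]; ring
    rw [hGvdef, heq]; linarith [hGl]
  -- extreme coefficients
  set cmin : ℝ := min 1 (min c2 (min c3 (min c4 (min c5 c6)))) with hcmindef
  set cmax : ℝ := max 1 (max c2 (max c3 (max c4 (max c5 c6)))) with hcmaxdef
  have hcminp : 0 < cmin := by
    rw [hcmindef]
    exact lt_min one_pos (lt_min hc2p (lt_min hc3p (lt_min hc4p (lt_min hc5p hc6p))))
  have hcmin1 : cmin ≤ 1 := min_le_left _ _
  have hcmin2 : cmin ≤ c2 := le_trans (min_le_right _ _) (min_le_left _ _)
  have hcmin3 : cmin ≤ c3 :=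
    le_trans (min_le_right _ _) (le_trans (min_le_right _ _) (min_le_left _ _))
  have hcmin4 : cmin ≤ c4 := le_trans (min_le_right _ _) (le_trans (min_le_right _ _)
    (le_trans (min_le_right _ _) (min_le_left _ _)))
  have hcmin5 : cmin ≤ c5 := le_trans (min_le_right _ _) (le_trans (min_le_right _ _)
    (le_trans (min_le_right _ _) (le_trans (min_le_right _ _) (min_le_left _ _))))
  have hcmin6 : cmin ≤ c6 := le_trans (min_le_right _ _) (le_trans (min_le_right _ _)
    (le_trans (min_le_right _ _) (le_trans (min_le_right _ _) (min_le_right _ _))))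
  have hcmax1 : 1 ≤ cmax := le_max_left _ _
  have hcmax2 : c2 ≤ cmax := le_trans (le_max_left _ _) (le_max_right _ _)
  have hcmax3 : c3 ≤ cmax :=
    le_trans (le_trans (le_max_left _ _) (le_max_right _ _)) (le_max_right _ _)
  have hcmax4 : c4 ≤ cmax := le_trans (le_trans (le_trans (le_max_left _ _)
    (le_max_right _ _)) (le_max_right _ _)) (le_max_right _ _)
  have hcmax5 : c5 ≤ cmax := le_trans (le_trans (le_trans (le_trans (le_max_left _ _)
    (le_max_right _ _)) (le_max_right _ _)) (le_max_right _ _)) (le_max_right _ _)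
  have hcmax6 : c6 ≤ cmax := le_trans (le_trans (le_trans (le_trans (le_max_right _ _)
    (le_max_right _ _)) (le_max_right _ _)) (le_max_right _ _)) (le_max_right _ _)
  have hcmaxp : 0 < cmax := lt_of_lt_of_le one_pos hcmax1
  clear_value cmin cmax
  -- small constants
  set ε' : ℝ := min (l/(2*(l+dM))) (min (l/(2*(l+dW))) (1/2)) with hε'def
  have hε'p : 0 < ε' := by
    rw [hε'def]
    exact lt_min (by positivity) (lt_min (by positivity) (by norm_num))
  have hε'M : ε' ≤ l/(2*(l+dM)) := min_le_left _ _
  have hε'W : ε' ≤ l/(2*(l+dW)) := le_trans (min_le_right _ _) (min_le_left _ _)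
  have hε'h : ε' ≤ 1/2 := le_trans (min_le_right _ _) (min_le_right _ _)
  clear_value ε'
  set P : ℝ := βHM*c3 + βHW*c5 with hPdef
  clear_value P
  have hPp : 0 < P := by rw [hPdef]; positivity
  set Q : ℝ := Gv*H/P with hQdef
  clear_value Q
  have hQp : 0 < Q := by rw [hQdef]; positivity
  set ε : ℝ := min (Q/2) (ε'*H*bH/(2*(βMH+βWH))) with hεdef
  have hεp : 0 < ε := by
    rw [hεdef]; exact lt_min (by positivity) (by positivity)
  have hεQ : ε ≤ Q/2 := min_le_left _ _
  have hεSH : ε ≤ ε'*H*bH/(2*(βMH+βWH)) := min_le_right _ _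
  clear_value ε
  set ε'' : ℝ := Q/(2*K) with hε''def
  clear_value ε''
  have hε''p : 0 < ε'' := by rw [hε''def]; positivity
  have hKε'' : K*ε'' = Q/2 := by
    rw [hε''def]; field_simp
  set δ : ℝ := l/2 with hδdef
  clear_value δ
  have hδp : 0 < δ := by rw [hδdef]; positivity
  set T0 : ℝ := Real.log (2/ε') / bH with hT0def
  clear_value T0
  have hT0p : 0 ≤ T0 := by
    rw [hT0def]
    apply div_nonneg _ hbH.le
    apply Real.log_nonneg
    rw [le_div_iff₀ hε'p]
    linarith
  have hexpT0 : Real.exp (-(bH*T0)) = ε'/2 := by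
    rw [hT0def, mul_div_cancel₀ _ (ne_of_gt hbH), Real.exp_neg,
      Real.exp_log (by positivity)]
    field_simp
  -- decay rate
  set M : ℝ := (γH+bH) + c2*(σH+bH) + c3*((γM+dM)+βHM) + c4*dM + c5*((γW+dW)+βHW) + c6*dW
    with hMdef
  clear_value M
  have hMp : 0 < M := by rw [hMdef]; positivity
  set Λ : ℝ := M/cmin with hΛdef
  clear_value Λ
  have hΛp : 0 < Λ := by rw [hΛdef]; positivity
  set b1 : ℝ := cmin*ε with hb1def
  clear_value b1
  have hb1p : 0 < b1 := by rw [hb1def]; positivity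
  set b2 : ℝ := b1*Real.exp (-(Λ*T0)) with hb2def
  clear_value b2
  have hb2p : 0 < b2 := by rw [hb2def]; positivity
  have hb2b1 : b2 ≤ b1 := by
    rw [hb2def]
    have h1 : Real.exp (-(Λ*T0)) ≤ 1 :=
      Real.exp_le_one_iff.mpr (neg_nonpos.mpr (mul_nonneg hΛp.le hT0p))
    calc b1 * Real.exp (-(Λ*T0)) ≤ b1 * 1 := mul_le_mul_of_nonneg_left h1 hb1p.le
    _ = b1 := mul_one b1
  -- the column inequalities
  have hcolEH : δ * 1 ≤ -(γH+bH) + c2*γH := by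
    rw [hkeyEH, hδdef]; linarith only [hl]
  have hcolEM : δ * c3 ≤ -(c3*(γM+dM)) + c4*γM := by
    rw [hkeyEM, hδdef]; nlinarith only [hc3p, hl, mul_pos hc3p hl]
  have hcolEW : δ * c5 ≤ -(c5*(γW+dW)) + c6*γW := by
    rw [hkeyEW, hδdef]; nlinarith only [hc5p, hl, mul_pos hc5p hl]
  have hcolIM : δ * c4 ≤ βMH*(1-ε') - c4*dM := by
    have h1 : ε'*(2*(l+dM)) ≤ l := by
      rw [← le_div_iff₀ (by positivity)]; exact hε'M
    rw [hkeyIM, hδdef]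
    nlinarith only [mul_le_mul_of_nonneg_left h1 hc4p.le, hc4p, hl, hdM]
  have hcolIW : δ * c6 ≤ βWH*(1-ε') - c6*dW := by
    have h1 : ε'*(2*(l+dW)) ≤ l := by
      rw [← le_div_iff₀ (by positivity)]; exact hε'W
    rw [hkeyIW, hδdef]
    nlinarith only [mul_le_mul_of_nonneg_left h1 hc6p.le, hc6p, hl, hdW]
  have hcolIH : δ * c2 ≤ -(c2*(σH+bH)) + c3*((βHM/H)*(K*(1-pstar)-K*ε''-ε))
      + c5*((βHW/H)*(K*pstar-K*ε''-ε)) := by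
    have hbudget : P*(K*ε''+ε)/H ≤ Gv := by
      have h1 : K*ε'' + ε ≤ Q := by linarith only [hKε'', hεQ]
      have h2 : P*(K*ε''+ε)/H ≤ P*Q/H := by gcongr
      have h3 : P*Q/H = Gv := by
        rw [hQdef]; field_simp
      linarith
    have hexpand : c3*((βHM/H)*(K*(1-pstar)-K*ε''-ε)) + c5*((βHW/H)*(K*pstar-K*ε''-ε))
        = (βHM*K*(1-pstar)/H)*c3 + (βHW*K*pstar/H)*c5 - P*(K*ε''+ε)/H := by
      rw [hPdef]; field_simp; ring
    have hGv' : (βHM*K*(1-pstar)/H)*c3 + (βHW*K*pstar/H)*c5 = Gv + (l+(σH+bH))*c2 := by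
      rw [hGvdef]; ring
    have hδl : δ*c2 ≤ l*c2 := by rw [hδdef]; nlinarith only [hc2p, hl]
    linarith only [hexpand, hGv', hbudget, hδl]
  -- final η
  refine ⟨b2/(2*cmax), div_pos hb2p (by linarith), ?_⟩
  intro SH EH IH EM IM EW IW p hode hnn hbox hptend hinit
  set N : ℝ → ℝ := fun s => EH s + IH s + EM s + IM s + EW s + IW s with hNdef
  set V : ℝ → ℝ := fun s => EH s + c2 * IH s + c3 * EM s + c4 * IM s + c5 * EW s + c6 * IW s
    with hVdef
  set DV : ℝ → ℝ := fun s =>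
    ((βMH / H) * IM s * SH s + (βWH / H) * IW s * SH s - (γH + bH) * EH s)
    + c2 * (γH * EH s - (σH + bH) * IH s)
    + c3 * ((βHM / H) * (K * (1 - p s) - EM s - IM s) * IH s - (γM + dM) * EM s)
    + c4 * (γM * EM s - dM * IM s)
    + c5 * ((βHW / H) * (K * p s - EW s - IW s) * IH s - (γW + dW) * EW s)
    + c6 * (γW * EW s - dW * IW s) with hDVdef
  have hVd : ∀ s ∈ Set.Ici (0:ℝ), HasDerivWithinAt V (DV s) (Set.Ici 0) s := by
    intro s hs
    obtain ⟨-, h2, h3, h4, h5, h6, h7, -⟩ := hode s hs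
    exact ((((h2.add (h3.const_mul c2)).add (h4.const_mul c3)).add
      (h5.const_mul c4)).add (h6.const_mul c5)).add (h7.const_mul c6)
  have hNs : ∀ s : ℝ, N s = EH s + IH s + EM s + IM s + EW s + IW s := fun s => rfl
  have hVs : ∀ s : ℝ, V s = EH s + c2 * IH s + c3 * EM s + c4 * IM s + c5 * EW s + c6 * IW s :=
    fun s => rfl
  have hDVs : ∀ s : ℝ, DV s = ((βMH / H) * IM s * SH s + (βWH / H) * IW s * SH s
      - (γH + bH) * EH s)
      + c2 * (γH * EH s - (σH + bH) * IH s)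
      + c3 * ((βHM / H) * (K * (1 - p s) - EM s - IM s) * IH s - (γM + dM) * EM s)
      + c4 * (γM * EM s - dM * IM s)
      + c5 * ((βHW / H) * (K * p s - EW s - IW s) * IH s - (γW + dW) * EW s)
      + c6 * (γW * EW s - dW * IW s) := fun s => rfl
  clear_value N V DV
  -- pointwise structural facts
  have key : ∀ s : ℝ, 0 ≤ s → 0 ≤ N s ∧ cmin * N s ≤ V s ∧ V s ≤ cmax * N s ∧
      N s ≤ H + K ∧ IH s ≤ H ∧ SH s ≤ H := by
    intro s hs
    obtain ⟨h1, h2, h3, h4, h5, h6, h7⟩ := hnn s (Set.mem_Ici.mpr hs)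
    obtain ⟨hbx1, hbx2, hbx3⟩ := hbox s (Set.mem_Ici.mpr hs)
    constructor
    · rw [hNs s]; linarith only [h2, h3, h4, h5, h6, h7]
    constructor
    · rw [hNs s, hVs s]
      have m1 : 0 ≤ (1 - cmin) * EH s := mul_nonneg (by linarith only [hcmin1]) h2
      have m2 : 0 ≤ (c2 - cmin) * IH s := mul_nonneg (by linarith only [hcmin2]) h3
      have m3 : 0 ≤ (c3 - cmin) * EM s := mul_nonneg (by linarith only [hcmin3]) h4
      have m4 : 0 ≤ (c4 - cmin) * IM s := mul_nonneg (by linarith only [hcmin4]) h5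
      have m5 : 0 ≤ (c5 - cmin) * EW s := mul_nonneg (by linarith only [hcmin5]) h6
      have m6 : 0 ≤ (c6 - cmin) * IW s := mul_nonneg (by linarith only [hcmin6]) h7
      nlinarith only [m1, m2, m3, m4, m5, m6]
    constructor
    · rw [hNs s, hVs s]
      have m1 : 0 ≤ (cmax - 1) * EH s := mul_nonneg (by linarith only [hcmax1]) h2
      have m2 : 0 ≤ (cmax - c2) * IH s := mul_nonneg (by linarith only [hcmax2]) h3
      have m3 : 0 ≤ (cmax - c3) * EM s := mul_nonneg (by linarith only [hcmax3]) h4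
      have m4 : 0 ≤ (cmax - c4) * IM s := mul_nonneg (by linarith only [hcmax4]) h5
      have m5 : 0 ≤ (cmax - c5) * EW s := mul_nonneg (by linarith only [hcmax5]) h6
      have m6 : 0 ≤ (cmax - c6) * IW s := mul_nonneg (by linarith only [hcmax6]) h7
      nlinarith only [m1, m2, m3, m4, m5, m6]
    refine ⟨by rw [hNs s]; linarith only [h1, hbx1, hbx2], by linarith only [h1, h2, hbx1],
      by linarith only [h2, h3, hbx1]⟩
  -- global decay bound : DV ≥ -Λ V
  have hglob : ∀ s : ℝ, 0 ≤ s → -Λ * V s ≤ DV s := by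
    intro s hs
    obtain ⟨h1, h2, h3, h4, h5, h6, h7⟩ := hnn s (Set.mem_Ici.mpr hs)
    obtain ⟨hbx1, hbx2, hbx3⟩ := hbox s (Set.mem_Ici.mpr hs)
    obtain ⟨hpl, hpu⟩ := hbx3
    obtain ⟨k0, kmin, kmax, kHK, kIH, kSH⟩ := key s hs
    have t1 : 0 ≤ (βMH / H) * IM s * SH s := mul_nonneg (mul_nonneg (by positivity) h5) h1
    have t2 : 0 ≤ (βWH / H) * IW s * SH s := mul_nonneg (mul_nonneg (by positivity) h7) h1
    have t3 : -(βHM * (EM s + IM s)) ≤ (βHM / H) * (K * (1 - p s) - EM s - IM s) * IH s := by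
      have e1 : 0 ≤ (βHM / H) * (K * (1 - p s)) * IH s :=
        mul_nonneg (mul_nonneg (by positivity)
          (mul_nonneg hK.le (by linarith only [hpu]))) h3
      have e2 : ((βHM / H) * (EM s + IM s)) * IH s ≤ ((βHM / H) * (EM s + IM s)) * H :=
        mul_le_mul_of_nonneg_left kIH (mul_nonneg (by positivity) (by linarith only [h4, h5]))
      have e3 : ((βHM / H) * (EM s + IM s)) * H = βHM * (EM s + IM s) := by
        field_simp
      linarith only [e1, e2, e3]
    have t4 : -(βHW * (EW s + IW s)) ≤ (βHW / H) * (K * p s - EW s - IW s) * IH s := by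
      have e1 : 0 ≤ (βHW / H) * (K * p s) * IH s :=
        mul_nonneg (mul_nonneg (by positivity) (mul_nonneg hK.le hpl)) h3
      have e2 : ((βHW / H) * (EW s + IW s)) * IH s ≤ ((βHW / H) * (EW s + IW s)) * H :=
        mul_le_mul_of_nonneg_left kIH (mul_nonneg (by positivity) (by linarith only [h6, h7]))
      have e3 : ((βHW / H) * (EW s + IW s)) * H = βHW * (EW s + IW s) := by
        field_simp
      linarith only [e1, e2, e3]
    have t3c : c3 * (-(βHM * (EM s + IM s))) ≤
        c3 * ((βHM / H) * (K * (1 - p s) - EM s - IM s) * IH s) :=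
      mul_le_mul_of_nonneg_left t3 hc3p.le
    have t4c : c5 * (-(βHW * (EW s + IW s))) ≤
        c5 * ((βHW / H) * (K * p s - EW s - IW s) * IH s) :=
      mul_le_mul_of_nonneg_left t4 hc5p.le
    have p1 : 0 ≤ c2 * (γH * EH s) := mul_nonneg hc2p.le (mul_nonneg hγH.le h2)
    have p2 : 0 ≤ c4 * (γM * EM s) := mul_nonneg hc4p.le (mul_nonneg hγM.le h4)
    have p3 : 0 ≤ c6 * (γW * EW s) := mul_nonneg hc6p.le (mul_nonneg hγW.le h6)
    have nEH : EH s ≤ N s := by rw [hNs s]; linarith only [h3, h4, h5, h6, h7]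
    have nIH : IH s ≤ N s := by rw [hNs s]; linarith only [h2, h4, h5, h6, h7]
    have nEM : EM s ≤ N s := by rw [hNs s]; linarith only [h2, h3, h5, h6, h7]
    have nIM : IM s ≤ N s := by rw [hNs s]; linarith only [h2, h3, h4, h6, h7]
    have nEMIM : EM s + IM s ≤ N s := by rw [hNs s]; linarith only [h2, h3, h6, h7]
    have nEW : EW s ≤ N s := by rw [hNs s]; linarith only [h2, h3, h4, h5, h7]
    have nIW : IW s ≤ N s := by rw [hNs s]; linarith only [h2, h3, h4, h5, h6]
    have nEWIW : EW s + IW s ≤ N s := by rw [hNs s]; linarith only [h2, h3, h4, h5]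
    have q1 : (γH + bH) * EH s ≤ (γH + bH) * N s :=
      mul_le_mul_of_nonneg_left nEH (by positivity)
    have q2 : (c2 * (σH + bH)) * IH s ≤ (c2 * (σH + bH)) * N s :=
      mul_le_mul_of_nonneg_left nIH (by positivity)
    have q3 : (c3 * (γM + dM)) * EM s ≤ (c3 * (γM + dM)) * N s :=
      mul_le_mul_of_nonneg_left nEM (by positivity)
    have q4 : (c3 * βHM) * (EM s + IM s) ≤ (c3 * βHM) * N s :=
      mul_le_mul_of_nonneg_left nEMIM (by positivity)
    have q5 : (c4 * dM) * IM s ≤ (c4 * dM) * N s :=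
      mul_le_mul_of_nonneg_left nIM (by positivity)
    have q6 : (c5 * (γW + dW)) * EW s ≤ (c5 * (γW + dW)) * N s :=
      mul_le_mul_of_nonneg_left nEW (by positivity)
    have q7 : (c5 * βHW) * (EW s + IW s) ≤ (c5 * βHW) * N s :=
      mul_le_mul_of_nonneg_left nEWIW (by positivity)
    have q8 : (c6 * dW) * IW s ≤ (c6 * dW) * N s :=
      mul_le_mul_of_nonneg_left nIW (by positivity)
    have hDVN : -(M * N s) ≤ DV s := by
      rw [hDVs s, hMdef]
      linarith only [t1, t2, t3c, t4c, p1, p2, p3, q1, q2, q3, q4, q5, q6, q7, q8]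
    have hMN : M * N s ≤ Λ * V s := by
      have hmm := mul_le_mul_of_nonneg_left kmin (le_of_lt (div_pos hMp hcminp))
      have heq : (M / cmin) * (cmin * N s) = M * N s := by
        field_simp
      rw [hΛdef]
      linarith only [hmm, heq]
    linarith only [hDVN, hMN]
  -- growth bound in the small region
  have hgrow : ∀ s : ℝ, 0 ≤ s → N s ≤ ε → (1 - ε') * H ≤ SH s →
      |p s - pstar| ≤ ε'' → δ * V s ≤ DV s := by
    intro s hs hNε hSHs hpp
    obtain ⟨h1, h2, h3, h4, h5, h6, h7⟩ := hnn s (Set.mem_Ici.mpr hs)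
    obtain ⟨hd1, hd2⟩ := abs_le.mp hpp
    have hEMIM : EM s + IM s ≤ ε := by rw [hNs s] at hNε; linarith only [hNε, h2, h3, h6, h7]
    have hEWIW : EW s + IW s ≤ ε := by rw [hNs s] at hNε; linarith only [hNε, h2, h3, h4, h5]
    have u1 : βMH * (1 - ε') * IM s ≤ (βMH / H) * IM s * SH s := by
      have w1 : ((βMH / H) * IM s) * ((1 - ε') * H) ≤ ((βMH / H) * IM s) * SH s :=
        mul_le_mul_of_nonneg_left hSHs (mul_nonneg (by positivity) h5)
      have w2 : ((βMH / H) * IM s) * ((1 - ε') * H) = βMH * (1 - ε') * IM s := by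
        field_simp
      linarith only [w1, w2]
    have u2 : βWH * (1 - ε') * IW s ≤ (βWH / H) * IW s * SH s := by
      have w1 : ((βWH / H) * IW s) * ((1 - ε') * H) ≤ ((βWH / H) * IW s) * SH s :=
        mul_le_mul_of_nonneg_left hSHs (mul_nonneg (by positivity) h7)
      have w2 : ((βWH / H) * IW s) * ((1 - ε') * H) = βWH * (1 - ε') * IW s := by
        field_simp
      linarith only [w1, w2]
    have u3 : (βHM / H) * (K * (1 - pstar) - K * ε'' - ε) * IH s ≤
        (βHM / H) * (K * (1 - p s) - EM s - IM s) * IH s := by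
      have w3 : K * (p s - pstar) ≤ K * ε'' := mul_le_mul_of_nonneg_left hd2 hK.le
      have hbr : K * (1 - pstar) - K * ε'' - ε ≤ K * (1 - p s) - EM s - IM s := by
        nlinarith only [w3, hEMIM]
      exact mul_le_mul_of_nonneg_right
        (mul_le_mul_of_nonneg_left hbr (by positivity)) h3
    have u5 : (βHW / H) * (K * pstar - K * ε'' - ε) * IH s ≤
        (βHW / H) * (K * p s - EW s - IW s) * IH s := by
      have w3 : K * (-ε'') ≤ K * (p s - pstar) := mul_le_mul_of_nonneg_left hd1 hK.le
      have hbr : K * pstar - K * ε'' - ε ≤ K * p s - EW s - IW s := by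
        nlinarith only [w3, hEWIW]
      exact mul_le_mul_of_nonneg_right
        (mul_le_mul_of_nonneg_left hbr (by positivity)) h3
    have c3u3 : c3 * ((βHM / H) * (K * (1 - pstar) - K * ε'' - ε) * IH s) ≤
        c3 * ((βHM / H) * (K * (1 - p s) - EM s - IM s) * IH s) :=
      mul_le_mul_of_nonneg_left u3 hc3p.le
    have c5u5 : c5 * ((βHW / H) * (K * pstar - K * ε'' - ε) * IH s) ≤
        c5 * ((βHW / H) * (K * p s - EW s - IW s) * IH s) :=
      mul_le_mul_of_nonneg_left u5 hc5p.le
    have m1 : (δ * 1) * EH s ≤ (-(γH + bH) + c2 * γH) * EH s :=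
      mul_le_mul_of_nonneg_right hcolEH h2
    have m2 : (δ * c2) * IH s ≤ (-(c2 * (σH + bH)) + c3 * ((βHM / H) * (K * (1 - pstar) - K * ε'' - ε))
        + c5 * ((βHW / H) * (K * pstar - K * ε'' - ε))) * IH s :=
      mul_le_mul_of_nonneg_right hcolIH h3
    have m3 : (δ * c3) * EM s ≤ (-(c3 * (γM + dM)) + c4 * γM) * EM s :=
      mul_le_mul_of_nonneg_right hcolEM h4
    have m4 : (δ * c4) * IM s ≤ (βMH * (1 - ε') - c4 * dM) * IM s :=
      mul_le_mul_of_nonneg_right hcolIM h5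
    have m5 : (δ * c5) * EW s ≤ (-(c5 * (γW + dW)) + c6 * γW) * EW s :=
      mul_le_mul_of_nonneg_right hcolEW h6
    have m6 : (δ * c6) * IW s ≤ (βWH * (1 - ε') - c6 * dW) * IW s :=
      mul_le_mul_of_nonneg_right hcolIW h7
    rw [hVs s, hDVs s]
    linarith only [u1, u2, c3u3, c5u5, m1, m2, m3, m4, m5, m6]
  -- derivative of V on subintervals
  have hVIcc : ∀ a b : ℝ, 0 ≤ a → ∀ s ∈ Set.Icc a b, HasDerivWithinAt V (DV s) (Set.Icc a b) s := by
    intro a b ha s hs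
    exact (hVd s (Set.mem_Ici.mpr (le_trans ha hs.1))).mono
      (fun x hx => Set.mem_Ici.mpr (le_trans ha hx.1))
  -- decay estimate
  have hdecay : ∀ a t : ℝ, 0 ≤ a → a ≤ t → V a * Real.exp (-Λ * (t - a)) ≤ V t := by
    intro a t ha hat
    exact expComp hat (hVIcc a t ha) (fun s hs => hglob s (le_trans ha hs.1))
  -- p eventually near pstar
  obtain ⟨T1, hT1⟩ := Metric.tendsto_atTop.mp hptend ε'' hε''p
  set Tstar : ℝ := max T1 0 with hTstardef
  have hTstar0 : (0:ℝ) ≤ Tstar := le_max_right _ _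
  have hpnear : ∀ t : ℝ, Tstar ≤ t → |p t - pstar| ≤ ε'' := by
    intro t ht
    have h := hT1 t (le_trans (le_max_left _ _) ht)
    rw [Real.dist_eq] at h
    exact h.le
  clear_value Tstar
  -- V is positive along the flow
  have hV0 : 0 < V 0 := by
    have hk := (key 0 le_rfl).2.1
    have hN0 : 0 < N 0 := by rw [hNs 0]; linarith only [hinit]
    nlinarith only [hk, hN0, hcminp]
  have hVpos : ∀ t : ℝ, 0 ≤ t → 0 < V t := by
    intro t ht
    have hd := hdecay 0 t le_rfl ht
    have h := mul_pos hV0 (Real.exp_pos (-Λ * (t - 0)))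
    linarith only [hd, h]
  -- smallness of V forces smallness of N
  have hNofV : ∀ s : ℝ, 0 ≤ s → V s ≤ b1 → N s ≤ ε := by
    intro s hs hv
    have hk := (key s hs).2.1
    rw [hb1def] at hv
    nlinarith only [hk, hv, hcminp]
  -- susceptible recovery
  have hrec : ∀ a t : ℝ, 0 ≤ a → a + T0 ≤ t → (∀ s : ℝ, a ≤ s → s ≤ t → N s ≤ ε) →
      (1 - ε') * H ≤ SH t := by
    intro a t ha hat hsm
    have hat' : a ≤ t := by linarith only [hat, hT0p]
    have hSHd : ∀ s ∈ Set.Icc a t, HasDerivWithinAt (fun r => SH r - (H - (βMH+βWH)*ε/bH))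
        (bH * H - (βMH / H) * IM s * SH s - (βWH / H) * IW s * SH s - bH * SH s)
        (Set.Icc a t) s := by
      intro s hs
      have h0 := (hode s (Set.mem_Ici.mpr (le_trans ha hs.1))).1
      exact (h0.mono (fun x hx => Set.mem_Ici.mpr (le_trans ha hx.1))).sub_const _
    have hineq : ∀ s ∈ Set.Icc a t, -bH * ((fun r => SH r - (H - (βMH+βWH)*ε/bH)) s) ≤
        bH * H - (βMH / H) * IM s * SH s - (βWH / H) * IW s * SH s - bH * SH s := by
      intro s hs
      have hs0 : (0:ℝ) ≤ s := le_trans ha hs.1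
      obtain ⟨h1, h2, h3, h4, h5, h6, h7⟩ := hnn s (Set.mem_Ici.mpr hs0)
      obtain ⟨k0, kmin, kmax, kHK, kIH, kSH⟩ := key s hs0
      have hNse := hsm s hs.1 hs.2
      have hIMε : IM s ≤ ε := by rw [hNs s] at hNse; linarith only [hNse, h2, h3, h4, h6, h7]
      have hIWε : IW s ≤ ε := by rw [hNs s] at hNse; linarith only [hNse, h2, h3, h4, h5, h6]
      have w1 : (βMH / H) * IM s * SH s ≤ βMH * ε := by
        have e1 : ((βMH/H) * IM s) * SH s ≤ ((βMH/H) * IM s) * H :=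
          mul_le_mul_of_nonneg_left kSH (mul_nonneg (by positivity) h5)
        have e2 : ((βMH/H) * IM s) * H ≤ ((βMH/H) * ε) * H :=
          mul_le_mul_of_nonneg_right
            (mul_le_mul_of_nonneg_left hIMε (by positivity)) hH.le
        have e3 : ((βMH/H) * ε) * H = βMH * ε := by field_simp
        linarith only [e1, e2, e3]
      have w2 : (βWH / H) * IW s * SH s ≤ βWH * ε := by
        have e1 : ((βWH/H) * IW s) * SH s ≤ ((βWH/H) * IW s) * H :=
          mul_le_mul_of_nonneg_left kSH (mul_nonneg (by positivity) h7)
        have e2 : ((βWH/H) * IW s) * H ≤ ((βWH/H) * ε) * H :=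
          mul_le_mul_of_nonneg_right
            (mul_le_mul_of_nonneg_left hIWε (by positivity)) hH.le
        have e3 : ((βWH/H) * ε) * H = βWH * ε := by field_simp
        linarith only [e1, e2, e3]
      have e4 : bH * ((βMH+βWH)*ε/bH) = (βMH+βWH)*ε := by field_simp
      simp only
      linarith only [w1, w2, e4]
    have hcomp := expComp (g := fun s => bH * H - (βMH / H) * IM s * SH s
      - (βWH / H) * IW s * SH s - bH * SH s) hat' hSHd hineq
    have hSHa0 : 0 ≤ SH a := (hnn a (Set.mem_Ici.mpr ha)).1
    have hLpos : 0 ≤ (βMH+βWH)*ε/bH := by positivity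
    have hbound1 : -H ≤ SH a - (H - (βMH+βWH)*ε/bH) := by
      linarith only [hSHa0, hLpos]
    have hexple : Real.exp (-bH*(t-a)) ≤ ε'/2 := by
      rw [← hexpT0]
      apply Real.exp_le_exp.mpr
      nlinarith only [mul_nonneg hbH.le (show (0:ℝ) ≤ t - a - T0 by linarith only [hat])]
    have hprod : -H * (ε'/2) ≤ (SH a - (H - (βMH+βWH)*ε/bH)) * Real.exp (-bH*(t-a)) := by
      have j1 : 0 ≤ (SH a - (H - (βMH+βWH)*ε/bH) + H) * Real.exp (-bH*(t-a)) :=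
        mul_nonneg (by linarith only [hbound1]) (Real.exp_pos _).le
      have j2 : H * Real.exp (-bH*(t-a)) ≤ H * (ε'/2) :=
        mul_le_mul_of_nonneg_left hexple hH.le
      linarith only [j1, j2]
    have hεbound : (βMH+βWH)*ε/bH ≤ ε'*H/2 := by
      rw [div_le_iff₀ hbH]
      have h := hεSH
      rw [le_div_iff₀ (by positivity : (0:ℝ) < 2*(βMH+βWH))] at h
      nlinarith only [h]
    linarith only [hcomp, hprod, hεbound]
  -- exponential growth in the small region
  have hgrowInt : ∀ a t : ℝ, Tstar ≤ a → a ≤ t →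
      (∀ s : ℝ, a ≤ s → s ≤ t → N s ≤ ε ∧ (1 - ε') * H ≤ SH s) →
      V a * Real.exp (δ * (t - a)) ≤ V t := by
    intro a t haT hat hcond
    have ha0 : (0:ℝ) ≤ a := le_trans hTstar0 haT
    have h := expComp (μ := -δ) hat (hVIcc a t ha0) (fun s hs => by
      have hs0 : (0:ℝ) ≤ s := le_trans ha0 hs.1
      have hc := hcond s hs.1 hs.2
      have hgr := hgrow s hs0 hc.1 hc.2 (hpnear s (le_trans haT hs.1))
      linarith only [hgr])
    rw [neg_neg] at h
    exact h
  -- one-step lower bound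
  have hstep : ∀ a t : ℝ, Tstar ≤ a → a ≤ t → (∀ s : ℝ, a ≤ s → s ≤ t → V s ≤ b1) →
      V a * Real.exp (-(Λ * T0)) ≤ V t := by
    intro a t haT hat hVsm
    have ha0 : (0:ℝ) ≤ a := le_trans hTstar0 haT
    by_cases hc : t ≤ a + T0
    · have hd := hdecay a t ha0 hat
      have he : Real.exp (-(Λ * T0)) ≤ Real.exp (-Λ * (t - a)) := by
        apply Real.exp_le_exp.mpr
        nlinarith only [mul_nonneg hΛp.le (show (0:ℝ) ≤ a + T0 - t by linarith only [hc])]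
      have hVa := (hVpos a ha0).le
      have hmm := mul_le_mul_of_nonneg_left he hVa
      linarith only [hmm, hd]
    · push_neg at hc
      have hNsm : ∀ s : ℝ, a ≤ s → s ≤ t → N s ≤ ε := fun s h1 h2 =>
        hNofV s (le_trans ha0 h1) (hVsm s h1 h2)
      have hd := hdecay a (a + T0) ha0 (by linarith only [hT0p])
      rw [show a + T0 - a = T0 by ring, neg_mul] at hd
      have hcond : ∀ s : ℝ, a + T0 ≤ s → s ≤ t → N s ≤ ε ∧ (1 - ε') * H ≤ SH s := by
        intro s h1 h2
        refine ⟨hNsm s (by linarith only [h1, hT0p]) h2, ?_⟩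
        exact hrec a s ha0 h1 (fun r hr1 hr2 => hNsm r hr1 (le_trans hr2 h2))
      have hg := hgrowInt (a + T0) t (by linarith only [haT, hT0p]) hc.le hcond
      have hone : (1:ℝ) ≤ Real.exp (δ * (t - (a + T0))) :=
        Real.one_le_exp (mul_nonneg hδp.le (by linarith only [hc]))
      have hVaT0 := (hVpos (a + T0) (by linarith only [ha0, hT0p])).le
      linarith only [hd, hg, mul_nonneg hVaT0 (sub_nonneg.mpr hone)]
  -- V eventually reaches b1
  have ht0ex : ∃ t0 : ℝ, Tstar ≤ t0 ∧ b1 ≤ V t0 := by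
    by_contra hcon
    push_neg at hcon
    have hNsm : ∀ s : ℝ, Tstar ≤ s → N s ≤ ε := fun s h1 =>
      hNofV s (le_trans hTstar0 h1) (hcon s h1).le
    have hA0 : (0:ℝ) ≤ Tstar + T0 := by linarith only [hTstar0, hT0p]
    have hVA : 0 < V (Tstar + T0) := hVpos _ hA0
    have hBpos : (0:ℝ) < cmax * (H + K) := by
      have : (0:ℝ) < H + K := by linarith only [hH, hK]
      positivity
    have hVAB : V (Tstar + T0) ≤ cmax * (H + K) := by
      have k1 := (key (Tstar + T0) hA0).2.2.1
      have k2 := (key (Tstar + T0) hA0).2.2.2.1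
      nlinarith only [k1, k2, hcmaxp]
    have hR1 : 1 ≤ cmax * (H + K) / V (Tstar + T0) := (one_le_div hVA).mpr hVAB
    have hlogR : 0 ≤ Real.log (cmax * (H + K) / V (Tstar + T0)) := Real.log_nonneg hR1
    set t : ℝ := (Tstar + T0) + (Real.log (cmax * (H + K) / V (Tstar + T0)) + 1)/δ with htdef
    have htA : Tstar + T0 ≤ t := by
      rw [htdef]
      have : 0 ≤ (Real.log (cmax * (H + K) / V (Tstar + T0)) + 1)/δ := by positivity
      linarith only [this]
    have hcond : ∀ s : ℝ, Tstar + T0 ≤ s → s ≤ t → N s ≤ ε ∧ (1 - ε') * H ≤ SH s := by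
      intro s h1 h2
      refine ⟨hNsm s (by linarith only [h1, hT0p]), ?_⟩
      exact hrec Tstar s hTstar0 h1 (fun r hr1 _ => hNsm r hr1)
    have hg := hgrowInt (Tstar + T0) t (by linarith only [hT0p]) htA hcond
    have hexp : Real.exp (δ * (t - (Tstar + T0)))
        = cmax * (H + K) / V (Tstar + T0) * Real.exp 1 := by
      rw [htdef]
      rw [show δ * ((Tstar + T0) + (Real.log (cmax * (H + K) / V (Tstar + T0)) + 1)/δ
        - (Tstar + T0)) = δ * ((Real.log (cmax * (H + K) / V (Tstar + T0)) + 1)/δ) by ring,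
        mul_div_cancel₀ _ (ne_of_gt hδp)]
      rw [Real.exp_add, Real.exp_log (by positivity)]
    rw [hexp] at hg
    have hVAR : V (Tstar + T0) * (cmax * (H + K) / V (Tstar + T0) * Real.exp 1)
        = cmax * (H + K) * Real.exp 1 := by
      field_simp
    rw [hVAR] at hg
    have hVt : V t ≤ cmax * (H + K) := by
      have k1 := (key t (le_trans hA0 htA)).2.2.1
      have k2 := (key t (le_trans hA0 htA)).2.2.2.1
      nlinarith only [k1, k2, hcmaxp]
    have he1 : (2:ℝ) ≤ Real.exp 1 := by nlinarith only [Real.add_one_le_exp (1:ℝ)]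
    have hbe := mul_le_mul_of_nonneg_left he1 hBpos.le
    linarith only [hg, hVt, hbe, hBpos]
  obtain ⟨t0, ht0T, ht0V⟩ := ht0ex
  have ht00 : (0:ℝ) ≤ t0 := le_trans hTstar0 ht0T
  -- main uniform lower bound
  have hmain : ∀ t : ℝ, t0 ≤ t → b2 ≤ V t := by
    intro t ht
    by_cases hbc : b1 ≤ V t
    · linarith only [hb2b1, hbc]
    push_neg at hbc
    have hcontV : ContinuousOn V (Set.Icc t0 t) := fun s hs =>
      ((hVd s (Set.mem_Ici.mpr (le_trans ht00 hs.1))).continuousWithinAt).mono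
        (fun x hx => Set.mem_Ici.mpr (le_trans ht00 hx.1))
    have hSclosed : IsClosed (Set.Icc t0 t ∩ V ⁻¹' Set.Ici b1) :=
      hcontV.preimage_isClosed_of_isClosed isClosed_Icc isClosed_Ici
    have hScomp : IsCompact (Set.Icc t0 t ∩ V ⁻¹' Set.Ici b1) :=
      isCompact_Icc.of_isClosed_subset hSclosed Set.inter_subset_left
    have hSne : (Set.Icc t0 t ∩ V ⁻¹' Set.Ici b1).Nonempty := ⟨t0, ⟨le_rfl, ht⟩, ht0V⟩
    have hτS := hScomp.sSup_mem hSne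
    set τ : ℝ := sSup (Set.Icc t0 t ∩ V ⁻¹' Set.Ici b1) with hτdef
    obtain ⟨⟨hτ1, hτ2⟩, hτV⟩ := hτS
    have hτV : b1 ≤ V τ := hτV
    have hτlt : τ < t := lt_of_le_of_ne hτ2 (fun h => by
      rw [h] at hτV; linarith only [hτV, hbc])
    have hup : ∀ s : ℝ, τ < s → s ≤ t → V s < b1 := by
      intro s h1 h2
      by_contra hns
      push_neg at hns
      have hmem : s ∈ Set.Icc t0 t ∩ V ⁻¹' Set.Ici b1 :=
        ⟨⟨le_trans hτ1 h1.le, h2⟩, hns⟩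
      have := le_csSup hScomp.bddAbove hmem
      rw [← hτdef] at this
      linarith only [this, h1]
    have hτVle : V τ ≤ b1 := by
      by_contra hgt
      push_neg at hgt
      have hcw : ContinuousWithinAt V (Set.Ioc τ t) τ :=
        ((hVd τ (Set.mem_Ici.mpr (le_trans ht00 hτ1))).continuousWithinAt).mono
          (fun x hx => Set.mem_Ici.mpr (le_trans ht00 (le_trans hτ1 hx.1.le)))
      have hev : ∀ᶠ s in nhdsWithin τ (Set.Ioc τ t), b1 < V s :=
        hcw.eventually (eventually_gt_nhds hgt)
      have hne : (nhdsWithin τ (Set.Ioc τ t)).NeBot := by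
        rw [nhdsWithin_Ioc_eq_nhdsGT hτlt]
        infer_instance
      obtain ⟨s, hs1, hs2⟩ := (hev.and self_mem_nhdsWithin).exists
      exact absurd hs1 (not_lt.mpr (hup s hs2.1 hs2.2).le)
    have hVsm : ∀ s : ℝ, τ ≤ s → s ≤ t → V s ≤ b1 := by
      intro s h1 h2
      rcases eq_or_lt_of_le h1 with h | h
      · rw [← h]; exact hτVle
      · exact (hup s h h2).le
    have hst := hstep τ t (le_trans ht0T hτ1) hτ2 hVsm
    have hm := mul_le_mul_of_nonneg_right hτV (Real.exp_pos (-(Λ*T0))).le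
    rw [hb2def]
    linarith only [hm, hst]
  -- conclude on the liminf
  have hevN : ∀ᶠ t in atTop, b2/cmax ≤ N t := by
    rw [eventually_atTop]
    refine ⟨max t0 0, fun t ht => ?_⟩
    have ht0' : t0 ≤ t := le_trans (le_max_left _ _) ht
    have htnn : (0:ℝ) ≤ t := le_trans (le_max_right _ _) ht
    have h1 := hmain t ht0'
    have h2 := (key t htnn).2.2.1
    rw [div_le_iff₀ hcmaxp]
    nlinarith only [h1, h2]
  have hbddN : IsBoundedUnder (· ≤ ·) atTop N := by
    apply isBoundedUnder_of_eventually_le (a := H + K)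
    rw [eventually_atTop]
    exact ⟨0, fun t ht => (key t ht).2.2.2.1⟩
  have hliminf : b2/cmax ≤ liminf N atTop :=
    le_liminf_of_le hbddN.isCoboundedUnder_ge hevN
  have hfin : b2/(2*cmax) < b2/cmax := by
    rw [div_lt_div_iff₀ (by positivity) hcmaxp]
    nlinarith only [hb2p, hcmaxp]
  linarith only [hfin, hliminf]
end

section
/- Consider the simplified Wolbachia system with no control (u = 0) and fix p* an equilibrium of p' = f(p). Let R_{p*}² = (R₀^W)²p* + (R₀^M)²(1−p*) and assume R_{p*} < 1. Then every nonnegative solution (S_H, E_H, I_H, E_M, I_M, E_W, I_W, p) of the system defined on [0,∞), remaining in the compact positively invariant region where S_H+E_H+I_H ≤ H, E_M+I_M+E_W+I_W ≤ K and 0 ≤ p ≤ 1, with p(t) → p* as t → ∞, satisfies lim_{t→∞} (E_H+I_H+E_M+I_M+E_W+I_W)(t) = 0. -/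
open Filter


/-- Auxiliary: if `V ≥ 0` on `[0,∞)`, `V' = D` on `[0,∞)` and `D ≤ -ε V` for `t ≥ T`,
then `V → 0`. -/
lemma gronwall_aux (V D : ℝ → ℝ) (ε T : ℝ) (hε : 0 < ε) (hT : 0 ≤ T)
    (hV : ∀ s ∈ Set.Ici (0:ℝ), HasDerivWithinAt V (D s) (Set.Ici 0) s)
    (hVnn : ∀ s ∈ Set.Ici (0:ℝ), 0 ≤ V s)
    (hD : ∀ s, T ≤ s → D s ≤ -ε * V s) :
    Tendsto V atTop (nhds 0) := by
  set g : ℝ → ℝ := fun t => V t * Real.exp (ε * t) with hg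
  have hcont : ContinuousOn V (Set.Ici 0) := fun s hs => (hV s hs).continuousWithinAt
  have hIciT : Set.Ici T ⊆ Set.Ici (0:ℝ) := Set.Ici_subset_Ici.mpr hT
  have hganti : AntitoneOn g (Set.Ici T) := by
    apply antitoneOn_of_hasDerivWithinAt_nonpos (convex_Ici T)
      (f' := fun x => D x * Real.exp (ε*x) + V x * (Real.exp (ε*x) * ε))
    · exact (hcont.mono hIciT).mul
        ((Real.continuous_exp.comp (continuous_const.mul continuous_id)).continuousOn)
    · intro x hx
      rw [interior_Ici] at hx
      have hx0 : 0 < x := lt_of_le_of_lt hT hx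
      have hVx : HasDerivAt V (D x) x := (hV x (Set.mem_Ici.mpr hx0.le)).hasDerivAt
        (Ici_mem_nhds hx0)
      have h1 : HasDerivAt (fun t : ℝ => ε*t) ε x := by
        simpa using (hasDerivAt_id x).const_mul ε
      exact (hVx.mul h1.exp).hasDerivWithinAt
    · intro x hx
      rw [interior_Ici] at hx
      have hx0 : 0 < x := lt_of_le_of_lt hT hx
      have h1 := hD x hx.le
      have h2 : (0:ℝ) < Real.exp (ε*x) := Real.exp_pos _
      have h3 := mul_le_mul_of_nonneg_right h1 h2.le
      have h4 : (-ε * V x) * Real.exp (ε*x) + V x * (Real.exp (ε*x) * ε) = 0 := by ring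
      linarith [h3, h4]
  have hbound : ∀ t, T ≤ t → V t ≤ g T * Real.exp (-(ε*t)) := by
    intro t ht
    have h1 : g t ≤ g T := hganti Set.self_mem_Ici (Set.mem_Ici.mpr ht) ht
    have h3 : V t = g t * Real.exp (-(ε*t)) := by
      rw [hg]
      simp only []
      rw [mul_assoc, ← Real.exp_add]
      simp
    rw [h3]
    exact mul_le_mul_of_nonneg_right h1 (Real.exp_nonneg _)
  have hup : Tendsto (fun t => g T * Real.exp (-(ε*t))) atTop (nhds 0) := by
    have h1 : Tendsto (fun t : ℝ => ε*t) atTop atTop :=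
      Tendsto.const_mul_atTop hε tendsto_id
    have h2 : Tendsto (fun t : ℝ => Real.exp (-(ε*t))) atTop (nhds 0) :=
      Real.tendsto_exp_neg_atTop_nhds_zero.comp h1
    simpa using h2.const_mul (g T)
  apply tendsto_of_tendsto_of_tendsto_of_le_of_le' tendsto_const_nhds hup
  · filter_upwards [eventually_ge_atTop (0:ℝ)] with t ht using hVnn t (Set.mem_Ici.mpr ht)
  · filter_upwards [eventually_ge_atTop T] with t ht using hbound t ht

/-- `√x < 1` implies `x < 1` for nonnegative `x`. -/
lemma sqrt_lt_one_aux {x : ℝ} (hx : 0 ≤ x) (h : Real.sqrt x < 1) : x < 1 := by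
  nlinarith [Real.sq_sqrt hx, Real.sqrt_nonneg x]

/-- Auxiliary weight inequality. -/
lemma wAux {A c δ ε w : ℝ} (hA : 0 < A) (hc : 0 < c) (hδ : 0 < δ) (hε : 0 < ε)
    (hw : w = A*(1+δ)/c) (hεle : ε ≤ c*δ/(1+δ)) : A + ε*w ≤ w*c := by
  have h1 : (0:ℝ) < 1+δ := by linarith
  have hwc : w*c = A*(1+δ) := by rw [hw]; field_simp
  have h2 : ε*w ≤ (c*δ/(1+δ))*(A*(1+δ)/c) := by
    rw [hw]; exact mul_le_mul_of_nonneg_right hεle (by positivity)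
  have h3 : (c*δ/(1+δ))*(A*(1+δ)/c) = A*δ := by field_simp
  linarith

set_option maxHeartbeats 2000000 in
/-- extinction of the disease in the simplified Wolbachia system
when `R_{p*} < 1`: every nonnegative solution staying in the invariant region,
whose `p`-component converges to the equilibrium `p*`, satisfies
`(E_H+I_H+E_M+I_M+E_W+I_W)(t) → 0` as `t → ∞`. -/
theorem extinction_Wolbachia
    (bH dM dW βMH βHM βWH βHW γH γM γW σH K H bM0 bW0 sh : ℝ)
    (hbH : 0 < bH) (hdM : 0 < dM) (hdW : 0 < dW)
    (hβMH : 0 < βMH) (hβHM : 0 < βHM) (hβWH : 0 < βWH) (hβHW : 0 < βHW)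
    (hγH : 0 < γH) (hγM : 0 < γM) (hγW : 0 < γW) (hσH : 0 < σH)
    (hK : 0 < K) (hH : 0 < H) (hbM0 : 0 < bM0) (hbW0 : 0 < bW0)
    (hsh0 : 0 < sh) (hsh1 : sh ≤ 1)
    (f : ℝ → ℝ)
    (hf : f = fun x => x * (1 - x) * (dM * bW0 - dW * bM0 * (1 - sh * x)) /
      (bM0 * (1 - x) * (1 - sh * x) + bW0 * x))
    (pstar : ℝ) (hpstar : pstar ∈ Set.Icc (0 : ℝ) 1)
    (hpeq : f pstar = 0)
    (R0M R0W : ℝ)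
    (hR0M : R0M = Real.sqrt (βHM * βMH * K * γM * γH /
      (H * dM * (bH + σH) * (γM + dM) * (γH + bH))))
    (hR0W : R0W = Real.sqrt (βHW * βWH * K * γW * γH /
      (H * dW * (bH + σH) * (γW + dW) * (γH + bH))))
    (hR : Real.sqrt (R0W ^ 2 * pstar + R0M ^ 2 * (1 - pstar)) < 1) :
    ∀ SH EH IH EM IM EW IW p : ℝ → ℝ,
      (∀ s ∈ Set.Ici (0 : ℝ),
        HasDerivWithinAt SH (bH * H - (βMH / H) * IM s * SH s
          - (βWH / H) * IW s * SH s - bH * SH s) (Set.Ici 0) s ∧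
        HasDerivWithinAt EH ((βMH / H) * IM s * SH s + (βWH / H) * IW s * SH s
          - (γH + bH) * EH s) (Set.Ici 0) s ∧
        HasDerivWithinAt IH (γH * EH s - (σH + bH) * IH s) (Set.Ici 0) s ∧
        HasDerivWithinAt EM ((βHM / H) * (K * (1 - p s) - EM s - IM s) * IH s
          - (γM + dM) * EM s) (Set.Ici 0) s ∧
        HasDerivWithinAt IM (γM * EM s - dM * IM s) (Set.Ici 0) s ∧
        HasDerivWithinAt EW ((βHW / H) * (K * p s - EW s - IW s) * IH s
          - (γW + dW) * EW s) (Set.Ici 0) s ∧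
        HasDerivWithinAt IW (γW * EW s - dW * IW s) (Set.Ici 0) s ∧
        HasDerivWithinAt p (f (p s)) (Set.Ici 0) s) →
      (∀ s ∈ Set.Ici (0 : ℝ), 0 ≤ SH s ∧ 0 ≤ EH s ∧ 0 ≤ IH s ∧
        0 ≤ EM s ∧ 0 ≤ IM s ∧ 0 ≤ EW s ∧ 0 ≤ IW s) →
      (∀ s ∈ Set.Ici (0 : ℝ), SH s + EH s + IH s ≤ H ∧
        EM s + IM s + EW s + IW s ≤ K ∧ p s ∈ Set.Icc (0 : ℝ) 1) →
      Tendsto p atTop (nhds pstar) →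
      Tendsto (fun s => EH s + IH s + EM s + IM s + EW s + IW s) atTop (nhds 0) := by
  intro SH EH IH EM IM EW IW p hode hnn hreg hp
  have haH : 0 < γH + bH := by linarith
  have hsHp : 0 < σH + bH := by linarith
  have haM : 0 < γM + dM := by linarith
  have haW : 0 < γW + dW := by linarith
  obtain ⟨hps0, hps1⟩ := hpstar
  -- basic reproduction number at pstar
  have hbnn : 0 ≤ R0W ^ 2 * pstar + R0M ^ 2 * (1 - pstar) :=
    add_nonneg (mul_nonneg (sq_nonneg _) hps0)
      (mul_nonneg (sq_nonneg _) (by linarith))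
  have hblt : R0W ^ 2 * pstar + R0M ^ 2 * (1 - pstar) < 1 := sqrt_lt_one_aux hbnn hR
  obtain ⟨R2, hR2def⟩ : ∃ x : ℝ, x = R0W ^ 2 * pstar + R0M ^ 2 * (1 - pstar) := ⟨_, rfl⟩
  have hR2nn : 0 ≤ R2 := by rw [hR2def]; exact hbnn
  have hR2lt : R2 < 1 := by rw [hR2def]; exact hblt
  obtain ⟨ρ, hρdef⟩ : ∃ x : ℝ, x = (3*R2+1)/4 := ⟨_, rfl⟩
  have hρ0 : 0 < ρ := by rw [hρdef]; linarith
  have hρ1 : ρ < 1 := by rw [hρdef]; linarith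
  have hR2ρ : R2 < ρ := by rw [hρdef]; linarith
  obtain ⟨δ, hδdef⟩ : ∃ x : ℝ, x = (1-ρ)/8 := ⟨_, rfl⟩
  have hδ0 : 0 < δ := by rw [hδdef]; linarith
  have hδ8 : δ ≤ 1/8 := by rw [hδdef]; linarith
  have h1δ : (0:ℝ) < 1+δ := by linarith
  have hcube : (1+δ)^3*ρ ≤ (1+ρ)/2 := by
    have hsq : δ*δ ≤ δ*(1/8) := mul_le_mul_of_nonneg_left hδ8 hδ0.le
    have hcub : δ*(δ*δ) ≤ δ*(δ*(1/8)) := mul_le_mul_of_nonneg_left hsq hδ0.le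
    have hA : (1+δ)^3 ≤ 1+4*δ := by linarith [hsq, hcub]
    have h4δρ : 4*δ*ρ = (1-ρ)/2*ρ := by rw [hδdef]; ring
    have hB : (1+4*δ)*ρ ≤ (1+ρ)/2 := by linarith [sq_nonneg (1-ρ), h4δρ]
    calc (1+δ)^3*ρ ≤ (1+4*δ)*ρ := mul_le_mul_of_nonneg_right hA hρ0.le
      _ ≤ (1+ρ)/2 := hB
  -- weights
  obtain ⟨w2, hw2def⟩ : ∃ x : ℝ, x = (γH+bH)/((1+δ)*γH) := ⟨_, rfl⟩
  obtain ⟨w4, hw4def⟩ : ∃ x : ℝ, x = βMH*(1+δ)/dM := ⟨_, rfl⟩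
  obtain ⟨w3, hw3def⟩ : ∃ x : ℝ, x = w4*γM*(1+δ)/(γM+dM) := ⟨_, rfl⟩
  obtain ⟨w6, hw6def⟩ : ∃ x : ℝ, x = βWH*(1+δ)/dW := ⟨_, rfl⟩
  obtain ⟨w5, hw5def⟩ : ∃ x : ℝ, x = w6*γW*(1+δ)/(γW+dW) := ⟨_, rfl⟩
  have hw2 : 0 < w2 := by rw [hw2def]; exact div_pos haH (mul_pos h1δ hγH)
  have hw4 : 0 < w4 := by rw [hw4def]; exact div_pos (mul_pos hβMH h1δ) hdM
  have hw3 : 0 < w3 := by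
    rw [hw3def]; exact div_pos (mul_pos (mul_pos hw4 hγM) h1δ) haM
  have hw6 : 0 < w6 := by rw [hw6def]; exact div_pos (mul_pos hβWH h1δ) hdW
  have hw5 : 0 < w5 := by
    rw [hw5def]; exact div_pos (mul_pos (mul_pos hw6 hγW) h1δ) haW
  have h1ρ : 0 < 1 - ρ := by linarith
  -- the decay rate
  obtain ⟨ε, hεdef⟩ : ∃ x : ℝ, x = min ((γH+bH)*δ/(1+δ)) (min ((σH+bH)*(1-ρ)/2)
    (min ((γM+dM)*δ/(1+δ)) (min (dM*δ/(1+δ)) (min ((γW+dW)*δ/(1+δ)) (dW*δ/(1+δ))))))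
    := ⟨_, rfl⟩
  have hε0 : 0 < ε := by
    rw [hεdef]
    exact lt_min (div_pos (mul_pos haH hδ0) h1δ)
      (lt_min (div_pos (mul_pos hsHp h1ρ) two_pos)
      (lt_min (div_pos (mul_pos haM hδ0) h1δ)
      (lt_min (div_pos (mul_pos hdM hδ0) h1δ)
      (lt_min (div_pos (mul_pos haW hδ0) h1δ) (div_pos (mul_pos hdW hδ0) h1δ)))))
  have hεle1 : ε ≤ (γH+bH)*δ/(1+δ) := by rw [hεdef]; exact min_le_left _ _
  have hεle2 : ε ≤ (σH+bH)*(1-ρ)/2 := by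
    rw [hεdef]; exact le_trans (min_le_right _ _) (min_le_left _ _)
  have hεle3 : ε ≤ (γM+dM)*δ/(1+δ) := by
    rw [hεdef]
    exact le_trans (min_le_right _ _) (le_trans (min_le_right _ _) (min_le_left _ _))
  have hεle4 : ε ≤ dM*δ/(1+δ) := by
    rw [hεdef]
    exact le_trans (min_le_right _ _) (le_trans (min_le_right _ _)
      (le_trans (min_le_right _ _) (min_le_left _ _)))
  have hεle5 : ε ≤ (γW+dW)*δ/(1+δ) := by
    rw [hεdef]
    exact le_trans (min_le_right _ _) (le_trans (min_le_right _ _)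
      (le_trans (min_le_right _ _) (le_trans (min_le_right _ _) (min_le_left _ _))))
  have hεle6 : ε ≤ dW*δ/(1+δ) := by
    rw [hεdef]
    exact le_trans (min_le_right _ _) (le_trans (min_le_right _ _)
      (le_trans (min_le_right _ _) (le_trans (min_le_right _ _) (min_le_right _ _))))
  -- constant inequalities
  have C1 : w2*γH + ε ≤ γH+bH := by
    have hw1' : (1:ℝ) = ((γH+bH)/(1+δ))*(1+δ)/(γH+bH) := by field_simp
    have h := wAux (A := (γH+bH)/(1+δ)) (c := γH+bH) (w := (1:ℝ))
      (by positivity) haH hδ0 hε0 hw1' hεle1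
    have h2 : w2*γH = (γH+bH)/(1+δ) := by rw [hw2def]; field_simp
    linarith
  have C3 : w4*γM + ε*w3 ≤ w3*(γM+dM) :=
    wAux (mul_pos hw4 hγM) haM hδ0 hε0 hw3def hεle3
  have C4 : βMH + ε*w4 ≤ w4*dM := wAux hβMH hdM hδ0 hε0 hw4def hεle4
  have C5 : w6*γW + ε*w5 ≤ w5*(γW+dW) :=
    wAux (mul_pos hw6 hγW) haW hδ0 hε0 hw5def hεle5
  have C6 : βWH + ε*w6 ≤ w6*dW := wAux hβWH hdW hδ0 hε0 hw6def hεle6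
  -- key identities with R0
  have hRM2 : R0M^2 = βHM*βMH*K*γM*γH/(H*dM*(bH+σH)*(γM+dM)*(γH+bH)) := by
    rw [hR0M]; exact Real.sq_sqrt (by positivity)
  have hRW2 : R0W^2 = βHW*βWH*K*γW*γH/(H*dW*(bH+σH)*(γW+dW)*(γH+bH)) := by
    rw [hR0W]; exact Real.sq_sqrt (by positivity)
  have idM : w3*(βHM*K/H) = R0M^2*((1+δ)^2*((σH+bH)*(γH+bH)/γH)) := by
    rw [hRM2, hw3def, hw4def]
    field_simp
    ring
  have idW : w5*(βHW*K/H) = R0W^2*((1+δ)^2*((σH+bH)*(γH+bH)/γH)) := by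
    rw [hRW2, hw5def, hw6def]
    field_simp
    ring
  have hc2const : (1+δ)^2*((σH+bH)*(γH+bH)/γH)*ρ + ε*w2 ≤ w2*(σH+bH) := by
    have key : (1+δ)^3*ρ*(σH+bH) + ε ≤ σH+bH := by
      have h := mul_le_mul_of_nonneg_right hcube hsHp.le
      linarith [h, hεle2]
    have hfac : w2*(σH+bH) - ((1+δ)^2*((σH+bH)*(γH+bH)/γH)*ρ + ε*w2)
        = ((γH+bH)/((1+δ)*γH)) * ((σH+bH) - ε - (1+δ)^3*ρ*(σH+bH)) := by
      rw [hw2def]; field_simp; ring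
    have hpos : (0:ℝ) ≤ (γH+bH)/((1+δ)*γH) := le_of_lt (div_pos haH (mul_pos h1δ hγH))
    linarith [hfac, mul_nonneg hpos
      (show (0:ℝ) ≤ (σH+bH) - ε - (1+δ)^3*ρ*(σH+bH) by linarith)]
  -- time after which the p-dependent coefficient is controlled
  have htend : Tendsto (fun s => R0M^2*(1-p s)+R0W^2*(p s)) atTop
      (nhds (R0M^2*(1-pstar)+R0W^2*pstar)) :=
    ((tendsto_const_nhds.sub hp).const_mul _).add (hp.const_mul _)
  have hlim : R0M^2*(1-pstar)+R0W^2*pstar < ρ := by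
    have : R0M^2*(1-pstar)+R0W^2*pstar = R2 := by rw [hR2def]; ring
    linarith
  obtain ⟨T0, hT0⟩ := eventually_atTop.mp (htend.eventually (eventually_le_nhds hlim))
  obtain ⟨T, hTdef⟩ : ∃ x : ℝ, x = max T0 0 := ⟨_, rfl⟩
  have hTnn : 0 ≤ T := by rw [hTdef]; exact le_max_right _ _
  have hTbound : ∀ s, T ≤ s → R0M^2*(1-p s)+R0W^2*(p s) ≤ ρ := fun s hs =>
    hT0 s (le_trans (le_max_left _ _) (hTdef ▸ hs))
  -- the p-dependent coefficient inequality
  have C2 : ∀ s, T ≤ s → w3*((βHM*K/H)*(1-p s)) + w5*((βHW*K/H)*(p s)) + ε*w2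
      ≤ w2*(σH+bH) := by
    intro s hs
    have h1 : w3*((βHM*K/H)*(1-p s)) + w5*((βHW*K/H)*(p s))
        = ((1+δ)^2*((σH+bH)*(γH+bH)/γH)) * (R0M^2*(1-p s)+R0W^2*(p s)) := by
      have e1 : w3*((βHM*K/H)*(1-p s)) = (w3*(βHM*K/H))*(1-p s) := by ring
      have e2 : w5*((βHW*K/H)*(p s)) = (w5*(βHW*K/H))*(p s) := by ring
      rw [e1, e2, idM, idW]; ring
    have h2 : ((1+δ)^2*((σH+bH)*(γH+bH)/γH)) * (R0M^2*(1-p s)+R0W^2*(p s))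
        ≤ ((1+δ)^2*((σH+bH)*(γH+bH)/γH)) * ρ :=
      mul_le_mul_of_nonneg_left (hTbound s hs) (by positivity)
    linarith [hc2const, h1 ▸ h2]
  -- Lyapunov function converges to 0
  have hVtend : Tendsto
      (fun t => EH t + w2*IH t + w3*EM t + w4*IM t + w5*EW t + w6*IW t)
      atTop (nhds 0) := by
    apply gronwall_aux _ (fun s =>
      ((βMH / H) * IM s * SH s + (βWH / H) * IW s * SH s - (γH + bH) * EH s)
      + w2*(γH * EH s - (σH + bH) * IH s)
      + w3*((βHM / H) * (K * (1 - p s) - EM s - IM s) * IH s - (γM + dM) * EM s)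
      + w4*(γM * EM s - dM * IM s)
      + w5*((βHW / H) * (K * p s - EW s - IW s) * IH s - (γW + dW) * EW s)
      + w6*(γW * EW s - dW * IW s)) ε T hε0 hTnn
    · intro s hs
      obtain ⟨_, h2, h3, h4, h5, h6, h7, _⟩ := hode s hs
      exact ((((h2.add (h3.const_mul w2)).add (h4.const_mul w3)).add
        (h5.const_mul w4)).add (h6.const_mul w5)).add (h7.const_mul w6)
    · intro s hs
      obtain ⟨hSH0, hEH0, hIH0, hEM0, hIM0, hEW0, hIW0⟩ := hnn s hs
      have := mul_nonneg hw2.le hIH0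
      have := mul_nonneg hw3.le hEM0
      have := mul_nonneg hw4.le hIM0
      have := mul_nonneg hw5.le hEW0
      have := mul_nonneg hw6.le hIW0
      linarith
    · intro s hsT
      have hs0 : (0:ℝ) ≤ s := le_trans hTnn hsT
      obtain ⟨hSH0, hEH0, hIH0, hEM0, hIM0, hEW0, hIW0⟩ := hnn s (Set.mem_Ici.mpr hs0)
      obtain ⟨hsum, _, hp01⟩ := hreg s (Set.mem_Ici.mpr hs0)
      have hSHle : SH s ≤ H := by linarith
      have e1 : (βMH/H)*IM s*SH s ≤ βMH*IM s := by
        have h := mul_le_mul_of_nonneg_left hSHle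
          (show (0:ℝ) ≤ (βMH/H)*IM s by positivity)
        have h2 : (βMH/H)*IM s*H = βMH*IM s := by field_simp
        linarith [h, h2]
      have e2 : (βWH/H)*IW s*SH s ≤ βWH*IW s := by
        have h := mul_le_mul_of_nonneg_left hSHle
          (show (0:ℝ) ≤ (βWH/H)*IW s by positivity)
        have h2 : (βWH/H)*IW s*H = βWH*IW s := by field_simp
        linarith [h, h2]
      have e3 : (βHM/H)*(K*(1-p s)-EM s-IM s)*IH s ≤ (βHM*K/H)*(1-p s)*IH s := by
        have hle : K*(1-p s)-EM s-IM s ≤ K*(1-p s) := by linarith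
        have h := mul_le_mul_of_nonneg_right
          (mul_le_mul_of_nonneg_left hle (le_of_lt (div_pos hβHM hH))) hIH0
        have heq : (βHM/H)*(K*(1-p s))*IH s = (βHM*K/H)*(1-p s)*IH s := by ring
        linarith [h, heq]
      have e4 : (βHW/H)*(K*p s-EW s-IW s)*IH s ≤ (βHW*K/H)*(p s)*IH s := by
        have hle : K*p s-EW s-IW s ≤ K*p s := by linarith
        have h := mul_le_mul_of_nonneg_right
          (mul_le_mul_of_nonneg_left hle (le_of_lt (div_pos hβHW hH))) hIH0
        have heq : (βHW/H)*(K*p s)*IH s = (βHW*K/H)*(p s)*IH s := by ring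
        linarith [h, heq]
      have t3 : w3*((βHM/H)*(K*(1-p s)-EM s-IM s)*IH s)
          ≤ w3*((βHM*K/H)*(1-p s)*IH s) := mul_le_mul_of_nonneg_left e3 hw3.le
      have t5 : w5*((βHW/H)*(K*p s-EW s-IW s)*IH s)
          ≤ w5*((βHW*K/H)*(p s)*IH s) := mul_le_mul_of_nonneg_left e4 hw5.le
      have q1 : (w2*γH - (γH+bH))*EH s ≤ (-ε)*EH s :=
        mul_le_mul_of_nonneg_right (by linarith [C1]) hEH0
      have hC2s := C2 s hsT
      have q2 : (w3*((βHM*K/H)*(1-p s)) + w5*((βHW*K/H)*(p s)) - w2*(σH+bH))*IH s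
          ≤ (-(ε*w2))*IH s :=
        mul_le_mul_of_nonneg_right (by linarith) hIH0
      have q3 : (w4*γM - w3*(γM+dM))*EM s ≤ (-(ε*w3))*EM s :=
        mul_le_mul_of_nonneg_right (by linarith [C3]) hEM0
      have q4 : (βMH - w4*dM)*IM s ≤ (-(ε*w4))*IM s :=
        mul_le_mul_of_nonneg_right (by linarith [C4]) hIM0
      have q5 : (w6*γW - w5*(γW+dW))*EW s ≤ (-(ε*w5))*EW s :=
        mul_le_mul_of_nonneg_right (by linarith [C5]) hEW0
      have q6 : (βWH - w6*dW)*IW s ≤ (-(ε*w6))*IW s :=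
        mul_le_mul_of_nonneg_right (by linarith [C6]) hIW0
      have hVexp : -ε * (EH s + w2*IH s + w3*EM s + w4*IM s + w5*EW s + w6*IW s)
          = (-ε)*EH s + (-(ε*w2))*IH s + (-(ε*w3))*EM s + (-(ε*w4))*IM s
            + (-(ε*w5))*EW s + (-(ε*w6))*IW s := by ring
      linarith [e1, e2, t3, t5, q1, q2, q3, q4, q5, q6, hVexp]
  -- squeeze the plain sum between 0 and a multiple of the Lyapunov function
  obtain ⟨c0, hc0def⟩ : ∃ x : ℝ, x = 1 + w2⁻¹ + w3⁻¹ + w4⁻¹ + w5⁻¹ + w6⁻¹ := ⟨_, rfl⟩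
  have hcomp : ∀ s, 0 ≤ s → EH s + IH s + EM s + IM s + EW s + IW s
      ≤ c0 * (EH s + w2*IH s + w3*EM s + w4*IM s + w5*EW s + w6*IW s) := by
    intro s hs
    obtain ⟨hSH0, hEH0, hIH0, hEM0, hIM0, hEW0, hIW0⟩ := hnn s (Set.mem_Ici.mpr hs)
    have m2 := mul_nonneg hw2.le hIH0
    have m3 := mul_nonneg hw3.le hEM0
    have m4 := mul_nonneg hw4.le hIM0
    have m5 := mul_nonneg hw5.le hEW0
    have m6 := mul_nonneg hw6.le hIW0
    obtain ⟨Vs, hVs⟩ : ∃ x : ℝ, x = EH s + w2*IH s + w3*EM s + w4*IM s + w5*EW s + w6*IW s := ⟨_, rfl⟩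
    have hVs0 : 0 ≤ Vs := by rw [hVs]; linarith
    have b1 : EH s ≤ Vs := by rw [hVs]; linarith
    have b2 : IH s ≤ w2⁻¹ * Vs := by
      have h : w2 * IH s ≤ Vs := by rw [hVs]; linarith
      have := mul_le_mul_of_nonneg_left h (inv_nonneg.mpr hw2.le)
      calc IH s = w2⁻¹*(w2*IH s) := by field_simp
        _ ≤ w2⁻¹*Vs := this
    have b3 : EM s ≤ w3⁻¹ * Vs := by
      have h : w3 * EM s ≤ Vs := by rw [hVs]; linarith
      have := mul_le_mul_of_nonneg_left h (inv_nonneg.mpr hw3.le)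
      calc EM s = w3⁻¹*(w3*EM s) := by field_simp
        _ ≤ w3⁻¹*Vs := this
    have b4 : IM s ≤ w4⁻¹ * Vs := by
      have h : w4 * IM s ≤ Vs := by rw [hVs]; linarith
      have := mul_le_mul_of_nonneg_left h (inv_nonneg.mpr hw4.le)
      calc IM s = w4⁻¹*(w4*IM s) := by field_simp
        _ ≤ w4⁻¹*Vs := this
    have b5 : EW s ≤ w5⁻¹ * Vs := by
      have h : w5 * EW s ≤ Vs := by rw [hVs]; linarith
      have := mul_le_mul_of_nonneg_left h (inv_nonneg.mpr hw5.le)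
      calc EW s = w5⁻¹*(w5*EW s) := by field_simp
        _ ≤ w5⁻¹*Vs := this
    have b6 : IW s ≤ w6⁻¹ * Vs := by
      have h : w6 * IW s ≤ Vs := by rw [hVs]; linarith
      have := mul_le_mul_of_nonneg_left h (inv_nonneg.mpr hw6.le)
      calc IW s = w6⁻¹*(w6*IW s) := by field_simp
        _ ≤ w6⁻¹*Vs := this
    have hrhs : c0 * Vs = Vs + w2⁻¹*Vs + w3⁻¹*Vs + w4⁻¹*Vs + w5⁻¹*Vs + w6⁻¹*Vs := by
      rw [hc0def]; ring
    rw [← hVs]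
    linarith [b1, b2, b3, b4, b5, b6, hrhs]
  apply tendsto_of_tendsto_of_tendsto_of_le_of_le' tendsto_const_nhds
    (show Tendsto (fun t => c0 * (EH t + w2*IH t + w3*EM t + w4*IM t + w5*EW t + w6*IW t))
      atTop (nhds 0) by simpa using hVtend.const_mul c0)
  · filter_upwards [eventually_ge_atTop (0:ℝ)] with t ht
    obtain ⟨_, hEH0, hIH0, hEM0, hIM0, hEW0, hIW0⟩ := hnn t (Set.mem_Ici.mpr ht)
    linarith
  · filter_upwards [eventually_ge_atTop (0:ℝ)] with t ht using hcomp t ht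
end

section
/- Fix c_i > 0, ε > 0, t_i ∈ ℝ. Let p_ε : [t_i, t_i+ε] → [0,1] solve p_ε'(t) = f(p_ε(t)) + (c_i/ε)·g(p_ε(t)) and let z_ε : [t_i, t_i+ε] → [0,1] solve z_ε'(t) = (c_i/ε)·g(z_ε(t)) with z_ε(t_i) = p_ε(t_i). Let M_f = max_{q∈[0,1]} |f(q)| and let L_g be a Lipschitz constant of g on [0,1]. Then for all t ∈ [t_i, t_i+ε], |z_ε(t) − p_ε(t)| ≤ ε·M_f·exp(c_i L_g). In particular, sup_{t∈[t_i,t_i+ε]} |z_ε(t) − p_ε(t)| → 0 as ε → 0. -/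
/-!
Both `p_ε` and `z_ε` follow the vector field `(c_i/ε) g`, which is `(c_i/ε) L_g`-Lipschitz on
`[0,1]`; `z_ε` is an exact trajectory and `p_ε` is a trajectory up to the defect `f(p_ε)`, of size
at most `M_f`. Grönwall's inequality then bounds the gap after time `s ≤ ε` by
`M_f s exp((c_i/ε) L_g s) ≤ ε M_f exp(c_i L_g)`: the factor `1/ε` in the Lipschitz constant is
compensated exactly by the length `ε` of the time window.
-/

open Filter Set Topology NNReal

theorem Real.exp_sub_one_le_mul_exp (y : ℝ) : Real.exp y - 1 ≤ y * Real.exp y := by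
  have h := mul_le_mul_of_nonneg_right (Real.one_sub_le_exp_neg y) (Real.exp_pos y).le
  rw [← Real.exp_add, neg_add_cancel, Real.exp_zero] at h
  linarith

theorem gronwallBound_zero_le {K M : ℝ} (hK : 0 ≤ K) (hM : 0 ≤ M) (x : ℝ) :
    gronwallBound 0 K M x ≤ M * x * Real.exp (K * x) := by
  rcases hK.eq_or_lt with rfl | hK
  · simp [gronwallBound_K0]
  · simp only [gronwallBound_of_K_ne_0 hK.ne', zero_mul, zero_add]
    calc M / K * (Real.exp (K * x) - 1) ≤ M / K * (K * x * Real.exp (K * x)) := by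
          gcongr
          exact Real.exp_sub_one_le_mul_exp _
      _ = M * x * Real.exp (K * x) := by field_simp

theorem dist_le_of_trajectory_of_approx_trajectory
    {E : Type*} [NormedAddCommGroup E] [NormedSpace ℝ E] {v : ℝ → E → E} {s : Set E} {K : ℝ≥0}
    {f g g' : ℝ → E} {M a b : ℝ} (hv : ∀ t, LipschitzOnWith K (v t) s)
    (hf : ∀ t ∈ Icc a b, HasDerivWithinAt f (v t (f t)) (Icc a b) t)
    (hfs : ∀ t ∈ Icc a b, f t ∈ s)
    (hg : ∀ t ∈ Icc a b, HasDerivWithinAt g (g' t) (Icc a b) t)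
    (hg' : ∀ t ∈ Icc a b, dist (g' t) (v t (g t)) ≤ M)
    (hgs : ∀ t ∈ Icc a b, g t ∈ s) (ha : f a = g a) :
    ∀ t ∈ Icc a b, dist (f t) (g t) ≤ M * (t - a) * Real.exp (K * (t - a)) := by
  intro t ht
  have hM : 0 ≤ M := dist_nonneg.trans (hg' a (left_mem_Icc.2 (ht.1.trans ht.2)))
  have right_deriv : ∀ {F F' : ℝ → E}, (∀ t ∈ Icc a b, HasDerivWithinAt F (F' t) (Icc a b) t) →
      ∀ t ∈ Ico a b, HasDerivWithinAt F (F' t) (Ici t) t :=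
    fun hF t ht =>
      (hF t (Ico_subset_Icc_self ht)).mono_of_mem_nhdsWithin (Icc_mem_nhdsGE_of_mem ht)
  have hgronwall := dist_le_of_approx_trajectories_ODE_of_mem (εf := 0) (δ := 0)
    (fun t _ => hv t) (fun t ht => (hf t ht).continuousWithinAt) (right_deriv hf)
    (fun t _ => (dist_self _).le) (fun t ht => hfs t (Ico_subset_Icc_self ht))
    (fun t ht => (hg t ht).continuousWithinAt) (right_deriv hg)
    (fun t ht => hg' t (Ico_subset_Icc_self ht)) (fun t ht => hgs t (Ico_subset_Icc_self ht))
    (dist_le_zero.2 ha) t ht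
  rw [zero_add] at hgronwall
  exact hgronwall.trans (gronwallBound_zero_le K.coe_nonneg hM _)

theorem tendsto_biSup_abs_nhdsGT_zero_of_abs_le_mul {F : ℝ → ℝ → ℝ} {S : ℝ → Set ℝ} {C : ℝ}
    (h : ∀ ε > 0, ∀ t ∈ S ε, |F ε t| ≤ ε * C) :
    Tendsto (fun ε => ⨆ t ∈ S ε, |F ε t|) (𝓝[>] 0) (𝓝 0) := by
  have hbound : Tendsto (fun ε : ℝ => ε * |C|) (𝓝[>] 0) (𝓝 0) :=
    tendsto_nhdsWithin_of_tendsto_nhds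
      ((continuous_id.mul continuous_const).tendsto' 0 0 (zero_mul _))
  refine tendsto_of_tendsto_of_tendsto_of_le_of_le' tendsto_const_nhds hbound ?_ ?_
  · exact Eventually.of_forall fun ε =>
      Real.iSup_nonneg fun t => Real.iSup_nonneg fun _ => abs_nonneg _
  · filter_upwards [self_mem_nhdsWithin] with ε (hε : 0 < ε)
    have hC : 0 ≤ ε * |C| := by positivity
    refine Real.iSup_le (fun t => Real.iSup_le (fun ht => ?_) hC) hC
    exact (h ε hε t ht).trans (by gcongr; exact le_abs_self C)

theorem comparison_with_pure_jump_solution_general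
    (f g : ℝ → ℝ)
    (ci ti : ℝ) (hci : 0 < ci)
    (Mf : ℝ) (hMf : ∀ q ∈ Set.Icc (0 : ℝ) 1, |f q| ≤ Mf)
    (Lg : NNReal) (hLg : LipschitzOnWith Lg g (Set.Icc (0 : ℝ) 1))
    (P Z : ℝ → ℝ → ℝ)
    (hrange : ∀ ε > (0 : ℝ), ∀ t ∈ Set.Icc ti (ti + ε),
      P ε t ∈ Set.Icc (0 : ℝ) 1 ∧ Z ε t ∈ Set.Icc (0 : ℝ) 1)
    (hP : ∀ ε > (0 : ℝ), ∀ t ∈ Set.Icc ti (ti + ε),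
      HasDerivWithinAt (P ε) (f (P ε t) + (ci / ε) * g (P ε t))
        (Set.Icc ti (ti + ε)) t)
    (hZ : ∀ ε > (0 : ℝ), ∀ t ∈ Set.Icc ti (ti + ε),
      HasDerivWithinAt (Z ε) ((ci / ε) * g (Z ε t)) (Set.Icc ti (ti + ε)) t)
    (hinit : ∀ ε > (0 : ℝ), Z ε ti = P ε ti) :
    (∀ ε > (0 : ℝ), ∀ t ∈ Set.Icc ti (ti + ε),
      |Z ε t - P ε t| ≤ ε * Mf * Real.exp (ci * Lg)) ∧
    Tendsto (fun ε => ⨆ t ∈ Set.Icc ti (ti + ε), |Z ε t - P ε t|)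
      (nhdsWithin 0 (Set.Ioi 0)) (nhds 0) := by
  have hbound : ∀ ε > (0 : ℝ), ∀ t ∈ Set.Icc ti (ti + ε),
      |Z ε t - P ε t| ≤ ε * Mf * Real.exp (ci * Lg) := by
    intro ε hε t ht
    have hgap := dist_le_of_trajectory_of_approx_trajectory (v := fun _ x => (ci / ε) * g x)
      (fun _ => (lipschitzWith_smul (ci / ε)).comp_lipschitzOnWith hLg) (hZ ε hε)
      (fun t ht => (hrange ε hε t ht).2) (hP ε hε)
      (fun t ht => by simpa [Real.dist_eq] using hMf _ (hrange ε hε t ht).1)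
      (fun t ht => (hrange ε hε t ht).1) (hinit ε hε) t ht
    have hMf0 : 0 ≤ Mf := (abs_nonneg _).trans (hMf _ (hrange ε hε t ht).1)
    have hcε : ci / ε * Lg * ε = ci * Lg := by field_simp
    rw [Real.dist_eq, NNReal.coe_mul, coe_nnnorm, Real.norm_of_nonneg (by positivity)] at hgap
    refine hgap.trans ?_
    calc Mf * (t - ti) * Real.exp (ci / ε * Lg * (t - ti))
        ≤ Mf * ε * Real.exp (ci / ε * Lg * ε) := by
          gcongr <;> linarith [ht.1, ht.2]
      _ = ε * Mf * Real.exp (ci * Lg) := by rw [hcε, mul_comm Mf]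
  refine ⟨hbound, tendsto_biSup_abs_nhdsGT_zero_of_abs_le_mul (C := Mf * Real.exp (ci * Lg)) ?_⟩
  exact fun ε hε t ht => (hbound ε hε t ht).trans_eq (by ring)

/-- comparison of `p_ε` with the auxiliary solution `z_ε` of
`z_ε' = (c_i/ε) g(z_ε)` with the same value at `t_i`:
`|z_ε(t) − p_ε(t)| ≤ ε M_f exp(c_i L_g)` on `[t_i, t_i+ε]`, hence the sup of the
difference tends to `0` as `ε → 0⁺`. -/
theorem comparison_with_pure_jump_solution
    (bM0 bW0 dM dW K sh : ℝ)
    (hbM0 : 0 < bM0) (hbW0 : 0 < bW0) (hdM : 0 < dM) (hdW : 0 < dW) (hK : 0 < K)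
    (hsh0 : 0 < sh) (hsh1 : sh ≤ 1)
    (f g : ℝ → ℝ)
    (hf : f = fun x => x * (1 - x) * (dM * bW0 - dW * bM0 * (1 - sh * x)) /
      (bM0 * (1 - x) * (1 - sh * x) + bW0 * x))
    (hg : g = fun x => (1 / K) * (bM0 * (1 - x) * (1 - sh * x)) /
      (bM0 * (1 - x) * (1 - sh * x) + bW0 * x))
    (ci ti : ℝ) (hci : 0 < ci)
    (Mf : ℝ) (hMf : ∀ q ∈ Set.Icc (0 : ℝ) 1, |f q| ≤ Mf)
    (Lg : NNReal) (hLg : LipschitzOnWith Lg g (Set.Icc (0 : ℝ) 1))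
    (P Z : ℝ → ℝ → ℝ)
    (hrange : ∀ ε > (0 : ℝ), ∀ t ∈ Set.Icc ti (ti + ε),
      P ε t ∈ Set.Icc (0 : ℝ) 1 ∧ Z ε t ∈ Set.Icc (0 : ℝ) 1)
    (hP : ∀ ε > (0 : ℝ), ∀ t ∈ Set.Icc ti (ti + ε),
      HasDerivWithinAt (P ε) (f (P ε t) + (ci / ε) * g (P ε t))
        (Set.Icc ti (ti + ε)) t)
    (hZ : ∀ ε > (0 : ℝ), ∀ t ∈ Set.Icc ti (ti + ε),
      HasDerivWithinAt (Z ε) ((ci / ε) * g (Z ε t)) (Set.Icc ti (ti + ε)) t)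
    (hinit : ∀ ε > (0 : ℝ), Z ε ti = P ε ti) :
    (∀ ε > (0 : ℝ), ∀ t ∈ Set.Icc ti (ti + ε),
      |Z ε t - P ε t| ≤ ε * Mf * Real.exp (ci * Lg)) ∧
    Tendsto (fun ε => ⨆ t ∈ Set.Icc ti (ti + ε), |Z ε t - P ε t|)
      (nhdsWithin 0 (Set.Ioi 0)) (nhds 0) :=
  comparison_with_pure_jump_solution_general f g ci ti hci Mf hMf Lg hLg P Z hrange hP hZ hinit
end
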